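/- arXiv:2111.07544 — 6 statements merged into one kernel-verified Lean document; each statement's English description precedes it below -/
import Mathlib

section
/- A positive integer N has an admissible phi-representation c with c(1) = c(0) = 1 if and only if the Bergman representation d of N satisfies d(1) = 0, d(0) = 0 and d(-1) = 0. -/
noncomputable section

attribute [local instance] Classical.propDecidable

/-- The golden mean φ = (1+√5)/2. -/
def goldenPhi : ℝ := (1 + Real.sqrt 5) / 2

/-- `c` is a phi-representation of `N`: a finitely supported digit function
`c : ℤ → ℕ` with digits ≤ 1 such that `N = ∑ i, c i * φ ^ i`. -/
def IsPhiRep (N : ℕ) (c : ℤ →₀ ℕ) : Prop :=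
  (∀ i, c i ≤ 1) ∧ (c.sum fun i a => (a : ℝ) * goldenPhi ^ i) = N

/-- Bergman representation: no two consecutive digits equal 1. -/
def IsBergman (N : ℕ) (c : ℤ →₀ ℕ) : Prop :=
  IsPhiRep N c ∧ ∀ i : ℤ, c (i + 1) * c i = 0

/-- Admissible representation: no two consecutive digits equal 1,
except possibly `c 1 = c 0 = 1`. -/
def IsAdmissible (N : ℕ) (c : ℤ →₀ ℕ) : Prop :=
  IsPhiRep N c ∧ ∀ i : ℤ, i ≠ 0 → c (i + 1) * c i = 0

/-- The Bergman representation of `N` (unique when `N ≥ 1`). -/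
noncomputable def bergmanRep (N : ℕ) : ℤ →₀ ℕ :=
  if h : ∃ c, IsBergman N c then h.choose else 0

/-- The canonical representation of `N`: the admissible representation with
`c 1 = c 0 = 1` if such exists, and the Bergman representation otherwise. -/
noncomputable def canonicalRep (N : ℕ) : ℤ →₀ ℕ :=
  if h : ∃ c, IsAdmissible N c ∧ c 1 = 1 ∧ c 0 = 1 then h.choose else bergmanRep N

/-- The Lucas numbers: L 0 = 2, L 1 = 1, L (n+2) = L (n+1) + L n. -/
def lucas : ℕ → ℕ
  | 0 => 2
  | 1 => 1
  | n + 2 => lucas (n + 1) + lucas n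

namespace StmtAux

local notation "φ" => goldenPhi

lemma sqrt5_sq : Real.sqrt 5 ^ 2 = 5 := Real.sq_sqrt (by norm_num)

lemma sqrt5_lt : 2 < Real.sqrt 5 := by
  nlinarith [sqrt5_sq, Real.sqrt_nonneg 5]

lemma one_lt_phi : 1 < φ := by
  unfold goldenPhi; nlinarith [sqrt5_lt]

lemma phi_pos : 0 < φ := zero_lt_one.trans one_lt_phi

lemma phi_ne : φ ≠ 0 := ne_of_gt phi_pos

lemma phi_sq : φ ^ (2:ℕ) = φ + 1 := by
  unfold goldenPhi; nlinarith [sqrt5_sq]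

lemma zphi_two : φ ^ (2:ℤ) = φ + 1 := by
  rw [show (2:ℤ) = ((2:ℕ):ℤ) by norm_num, zpow_natCast]; exact phi_sq

lemma zphi (i : ℤ) : φ ^ (i+2) = φ ^ (i+1) + φ ^ i := by
  rw [zpow_add₀ phi_ne i 2, zpow_add₀ phi_ne i 1, zphi_two, zpow_one]; ring

lemma zphi' {a b c : ℤ} (h1 : a = c + 2) (h2 : b = c + 1) : φ ^ a = φ ^ b + φ ^ c := by
  subst h1; subst h2; exact zphi c

lemma zphi_pos (i : ℤ) : 0 < φ ^ i := zpow_pos phi_pos i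

lemma zphi_lt {i j : ℤ} (h : i < j) : φ ^ i < φ ^ j := zpow_lt_zpow_right₀ one_lt_phi h

lemma zphi_le {i j : ℤ} (h : i ≤ j) : φ ^ i ≤ φ ^ j := by
  rcases eq_or_lt_of_le h with h | h
  · exact le_of_eq (by rw [h])
  · exact le_of_lt (zphi_lt h)

lemma two_lt_phisq : 2 < φ ^ (2:ℤ) := by rw [zphi_two]; linarith [one_lt_phi]

/-! ### Values of digit sets -/

def sval (S : Finset ℤ) : ℝ := ∑ i ∈ S, φ ^ i

def Nonadj (S : Finset ℤ) : Prop := ∀ i ∈ S, i + 1 ∉ S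

lemma sval_empty : sval ∅ = 0 := Finset.sum_empty

lemma sval_nonneg (S : Finset ℤ) : 0 ≤ sval S :=
  Finset.sum_nonneg fun i _ => (zphi_pos i).le

lemma sval_insert {a : ℤ} {S : Finset ℤ} (h : a ∉ S) :
    sval (insert a S) = φ ^ a + sval S := Finset.sum_insert h

lemma le_sval_of_mem {a : ℤ} {S : Finset ℤ} (h : a ∈ S) : φ ^ a ≤ sval S :=
  Finset.single_le_sum (fun i _ => (zphi_pos i).le) h

lemma nonadj_subset {S T : Finset ℤ} (h : T ⊆ S) (hS : Nonadj S) : Nonadj T :=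
  fun i hi hi1 => hS i (h hi) (h hi1)

lemma insert_top {a : ℤ} {S : Finset ℤ} (hS : Nonadj S) (ha : ∀ i ∈ S, i + 2 ≤ a) :
    a ∉ S ∧ Nonadj (insert a S) ∧ sval (insert a S) = φ ^ a + sval S := by
  have hnm : a ∉ S := fun h => by have := ha a h; omega
  refine ⟨hnm, ?_, sval_insert hnm⟩
  intro i hi hi1
  rcases Finset.mem_insert.1 hi with rfl | hi
  · rcases Finset.mem_insert.1 hi1 with h | h
    · omega
    · have := ha _ h; omega
  · rcases Finset.mem_insert.1 hi1 with h | h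
    · have := ha i hi; omega
    · exact hS i hi h

lemma insert_bot {a : ℤ} {S : Finset ℤ} (hS : Nonadj S) (ha : ∀ i ∈ S, a + 2 ≤ i) :
    a ∉ S ∧ Nonadj (insert a S) ∧ sval (insert a S) = φ ^ a + sval S := by
  have hnm : a ∉ S := fun h => by have := ha a h; omega
  refine ⟨hnm, ?_, sval_insert hnm⟩
  intro i hi hi1
  rcases Finset.mem_insert.1 hi with rfl | hi
  · rcases Finset.mem_insert.1 hi1 with h | h
    · omega
    · have := ha _ h; omega
  · rcases Finset.mem_insert.1 hi1 with h | h
    · have := hS i hi; have := ha i hi; omega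
    · exact hS i hi h

lemma sval_lt_aux : ∀ n (S : Finset ℤ), S.card ≤ n → Nonadj S →
    ∀ m : ℤ, (∀ i ∈ S, i ≤ m) → sval S < φ ^ (m+1) := by
  intro n
  induction n with
  | zero =>
    intro S hc _ m _
    have hS : S = ∅ := Finset.card_eq_zero.1 (Nat.le_zero.1 hc)
    rw [hS, sval_empty]; exact zphi_pos _
  | succ n ih =>
    intro S hc hna m hm
    rcases S.eq_empty_or_nonempty with rfl | hne
    · rw [sval_empty]; exact zphi_pos _
    · set M := S.max' hne with hM
      have hMm : M ∈ S := S.max'_mem hne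
      have hMle : M ≤ m := hm M hMm
      have hsub : ∀ i ∈ S.erase M, i ≤ M - 2 := by
        intro i hi
        have h1 : i ∈ S := Finset.mem_of_mem_erase hi
        have h2 : i ≠ M := Finset.ne_of_mem_erase hi
        have h3 : i ≤ M := S.le_max' i h1
        have h4 : i ≠ M - 1 := by
          intro he
          exact hna i h1 (by rw [he, sub_add_cancel]; exact hMm)
        omega
      have hcard : (S.erase M).card ≤ n := by
        have := Finset.card_erase_of_mem hMm
        have := Finset.card_pos.2 hne
        omega
      have hlt := ih (S.erase M) hcard
        (nonadj_subset (Finset.erase_subset _ _) hna) (M-2) hsub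
      have hsp : sval S = φ ^ M + sval (S.erase M) :=
        (Finset.add_sum_erase S _ hMm).symm
      have e1 : φ ^ (M+1) = φ ^ M + φ ^ (M-1) := zphi' (by ring) (by ring)
      have e2 : (M - 2) + 1 = M - 1 := by ring
      rw [e2] at hlt
      have : sval S < φ ^ (M+1) := by rw [hsp, e1]; linarith
      exact lt_of_lt_of_le this (zphi_le (by omega))

lemma sval_lt {S : Finset ℤ} (hS : Nonadj S) {m : ℤ} (hm : ∀ i ∈ S, i ≤ m) :
    sval S < φ ^ (m+1) := sval_lt_aux S.card S le_rfl hS m hm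

lemma eq_empty_of_sval_eq_zero {S : Finset ℤ} (h : sval S = 0) : S = ∅ := by
  rcases S.eq_empty_or_nonempty with rfl | ⟨a, ha⟩
  · rfl
  · have := le_sval_of_mem ha
    have := zphi_pos a
    linarith

lemma sval_inj_aux : ∀ n (S T : Finset ℤ), (S ∪ T).card ≤ n → Nonadj S → Nonadj T →
    sval S = sval T → S = T := by
  intro n
  induction n with
  | zero =>
    intro S T hc _ _ _
    have h : S ∪ T = ∅ := Finset.card_eq_zero.1 (Nat.le_zero.1 hc)
    have hS : S = ∅ := Finset.subset_empty.1 (h ▸ Finset.subset_union_left)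
    have hT : T = ∅ := Finset.subset_empty.1 (h ▸ Finset.subset_union_right)
    rw [hS, hT]
  | succ n ih =>
    intro S T hc hS hT hv
    rcases (S ∪ T).eq_empty_or_nonempty with he | hne
    · have hS' : S = ∅ := Finset.subset_empty.1 (he ▸ Finset.subset_union_left)
      have hT' : T = ∅ := Finset.subset_empty.1 (he ▸ Finset.subset_union_right)
      rw [hS', hT']
    · set M := (S ∪ T).max' hne with hM
      have hMm : M ∈ S ∪ T := (S ∪ T).max'_mem hne
      have hbS : ∀ i ∈ S, i ≤ M := fun i hi => (S ∪ T).le_max' i (Finset.mem_union_left _ hi)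
      have hbT : ∀ i ∈ T, i ≤ M := fun i hi => (S ∪ T).le_max' i (Finset.mem_union_right _ hi)
      have key : ∀ A B : Finset ℤ, Nonadj B → sval A = sval B → M ∈ A →
          (∀ i ∈ B, i ≤ M) → M ∈ B := by
        intro A B hB hvAB hMA hbB
        by_contra hMB
        have hb' : ∀ i ∈ B, i ≤ M - 1 := by
          intro i hi
          have := hbB i hi
          have : i ≠ M := fun he => hMB (he ▸ hi)
          omega
        have h1 : sval B < φ ^ (M - 1 + 1) := sval_lt hB hb'
        have h2 : φ ^ M ≤ sval A := le_sval_of_mem hMA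
        rw [show M - 1 + 1 = M by ring] at h1
        rw [hvAB] at h2
        linarith
      have hMS : M ∈ S := by
        rcases Finset.mem_union.1 hMm with h | h
        · exact h
        · exact key T S hS hv.symm h hbS
      have hMT : M ∈ T := key S T hT hv hMS hbT
      have hvS : sval S = φ ^ M + sval (S.erase M) := (Finset.add_sum_erase S _ hMS).symm
      have hvT : sval T = φ ^ M + sval (T.erase M) := (Finset.add_sum_erase T _ hMT).symm
      have hcard : ((S.erase M) ∪ (T.erase M)).card ≤ n := by
        have h1 : (S.erase M) ∪ (T.erase M) = (S ∪ T).erase M := (Finset.erase_union_distrib S T M).symm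
        rw [h1]
        have := Finset.card_erase_of_mem hMm
        have := Finset.card_pos.2 hne
        omega
      have := ih (S.erase M) (T.erase M) hcard
        (nonadj_subset (Finset.erase_subset _ _) hS)
        (nonadj_subset (Finset.erase_subset _ _) hT)
        (by linarith [hvS, hvT])
      have e1 : S = insert M (S.erase M) := (Finset.insert_erase hMS).symm
      have e2 : T = insert M (T.erase M) := (Finset.insert_erase hMT).symm
      rw [e1, e2, this]

lemma sval_inj {S T : Finset ℤ} (hS : Nonadj S) (hT : Nonadj T) (h : sval S = sval T) :
    S = T := sval_inj_aux (S ∪ T).card S T le_rfl hS hT h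

/-! ### Lucas numbers -/

lemma lucas_add_two (n : ℕ) : lucas (n+2) = lucas (n+1) + lucas n := rfl

lemma lucas_pos : ∀ n, 0 < lucas n
  | 0 => by norm_num [lucas]
  | 1 => by norm_num [lucas]
  | n+2 => by rw [lucas_add_two]; have := lucas_pos (n+1); omega

def gpsi : ℝ := 1 - goldenPhi

lemma lucas_real : ∀ n : ℕ, (lucas n : ℝ) = φ ^ n + gpsi ^ n
  | 0 => by norm_num [lucas]
  | 1 => by norm_num [lucas, gpsi]
  | n+2 => by
    have h1 := lucas_real (n+1)
    have h2 := lucas_real n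
    have e1 : φ ^ (n+2) = φ ^ (n+1) + φ ^ n := by
      have : φ ^ (n+2) = φ ^ n * (φ ^ (2:ℕ)) := by ring
      rw [this, phi_sq]; ring
    have e2 : gpsi ^ (n+2) = gpsi ^ (n+1) + gpsi ^ n := by
      have hg : gpsi ^ (2:ℕ) = gpsi + 1 := by unfold gpsi; nlinarith [phi_sq]
      have : gpsi ^ (n+2) = gpsi ^ n * (gpsi ^ (2:ℕ)) := by ring
      rw [this, hg]; ring
    rw [lucas_add_two]
    push_cast
    rw [h1, h2, e1, e2]; ring

lemma phi_inv : φ⁻¹ = φ - 1 := by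
  have h : φ * (φ - 1) = 1 := by nlinarith [phi_sq]
  exact inv_eq_of_mul_eq_one_right h

lemma gpsi_eq : gpsi = -φ⁻¹ := by rw [phi_inv]; unfold gpsi; ring

lemma zphi_neg_nat (n : ℕ) : φ ^ (-(n:ℤ)) = (φ⁻¹) ^ n := by
  rw [zpow_neg, zpow_natCast, inv_pow]

lemma lucas_even'' (m k : ℕ) (hm : m = 2*k) (a b : ℤ) (ha : a = (m:ℤ)) (hb : b = -(m:ℤ)) :
    (lucas m : ℝ) = φ ^ a + φ ^ b := by
  subst ha; subst hb
  rw [lucas_real m, zpow_natCast, zphi_neg_nat, gpsi_eq, hm]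
  rw [show (-φ⁻¹) ^ (2*k) = (φ⁻¹) ^ (2*k) by rw [neg_pow]; simp [pow_mul]]

lemma lucas_odd'' (m k : ℕ) (hm : m = 2*k+1) (a b : ℤ) (ha : a = (m:ℤ)) (hb : b = -(m:ℤ)) :
    (lucas m : ℝ) = φ ^ a - φ ^ b := by
  subst ha; subst hb
  rw [lucas_real m, zpow_natCast, zphi_neg_nat, gpsi_eq, hm]
  rw [show (-φ⁻¹) ^ (2*k+1) = -((φ⁻¹) ^ (2*k+1)) by rw [neg_pow]; simp [pow_mul, pow_succ]]
  ring

lemma le_lucas_odd : ∀ k : ℕ, k + 1 ≤ lucas (2*k+1)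
  | 0 => by norm_num [lucas]
  | k+1 => by
    have h1 := le_lucas_odd k
    have h2 := lucas_pos (2*k+1+1)
    have e : 2*(k+1)+1 = (2*k+1)+2 := by ring
    rw [e, lucas_add_two]
    omega

/-! ### Chains -/

def chain (m : ℕ) : Finset ℤ := Finset.image (fun j : ℕ => (2*(j:ℤ)+3 : ℤ)) (Finset.range m)

lemma mem_chain {m : ℕ} {i : ℤ} : i ∈ chain m ↔ ∃ j : ℕ, j < m ∧ 2*(j:ℤ)+3 = i := by
  simp [chain]

lemma chain_bdd {m : ℕ} {i : ℤ} (h : i ∈ chain m) : 3 ≤ i ∧ i ≤ 2*(m:ℤ)+1 := by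
  rw [mem_chain] at h
  obtain ⟨j, hj, he⟩ := h
  omega

lemma chain_nonadj (m : ℕ) : Nonadj (chain m) := by
  intro i hi hi1
  rw [mem_chain] at hi hi1
  obtain ⟨j, hj, he⟩ := hi
  obtain ⟨l, hl, he'⟩ := hi1
  omega

lemma chain_succ (m : ℕ) : chain (m+1) = insert (2*(m:ℤ)+3) (chain m) := by
  unfold chain
  rw [Finset.range_add_one, Finset.image_insert]

lemma chain_sval : ∀ m : ℕ, sval (chain m) = φ ^ (2*(m:ℤ)+2) - φ ^ (2:ℤ)
  | 0 => by norm_num [chain, sval_empty, sval]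
  | m+1 => by
    have hni : (2*(m:ℤ)+3) ∉ chain m := by
      intro h; have := chain_bdd h; omega
    rw [chain_succ, sval_insert hni, chain_sval m]
    have e1 : φ ^ (2*((m:ℤ)+1)+2) = φ ^ (2*(m:ℤ)+3) + φ ^ (2*(m:ℤ)+2) :=
      zphi' (by ring) (by ring)
    push_cast
    rw [e1]; ring

/-! ### The main construction -/

def Tgood (S : Finset ℤ) : Prop := ∀ i ∈ S, i ≤ -2 ∨ 3 ≤ i

def CC (k : ℕ) : Prop := ∀ N : ℕ, N ≤ lucas (2*k+1) →
  ∃ S : Finset ℤ, Nonadj S ∧ (∀ i ∈ S, -(2*(k:ℤ)) ≤ i ∧ i ≤ 2*(k:ℤ)) ∧ sval S = N ∧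
    ((-1:ℤ) ∉ S ∧ (0:ℤ) ∉ S ∧ (1:ℤ) ∉ S →
      N = 0 ∨ ∃ T : Finset ℤ, Nonadj T ∧ (∀ i ∈ T, -(2*(k:ℤ)) ≤ i ∧ i ≤ 2*(k:ℤ)) ∧ Tgood T ∧
        φ ^ (2:ℤ) + sval T = N)

def FF (k : ℕ) : Prop := ∀ s : ℕ, 1 ≤ s → s ≤ lucas (2*k) - 1 →
  ∃ S : Finset ℤ, Nonadj S ∧ (∀ i ∈ S, -(2*(k:ℤ))+1 ≤ i ∧ i ≤ 2*(k:ℤ)-1) ∧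
    sval S = s - φ ^ (-(2*(k:ℤ))) ∧
    ((-1:ℤ) ∉ S ∧ (0:ℤ) ∉ S ∧ (1:ℤ) ∉ S →
      ∃ T : Finset ℤ, Nonadj T ∧ (∀ i ∈ T, -(2*(k:ℤ))+1 ≤ i ∧ i ≤ 2*(k:ℤ)-1) ∧ Tgood T ∧
        φ ^ (2:ℤ) + sval T = s - φ ^ (-(2*(k:ℤ))))

lemma CC0 : CC 0 := by
  intro N hN
  have hl : lucas (2*0+1) = 1 := rfl
  have : N = 0 ∨ N = 1 := by omega
  rcases this with rfl | rfl
  · refine ⟨∅, ?_, ?_, ?_, fun _ => Or.inl rfl⟩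
    · intro i hi; simp at hi
    · intro i hi; simp at hi
    · simp [sval_empty]
  · refine ⟨{0}, ?_, ?_, ?_, ?_⟩
    · intro i hi hi1
      simp only [Finset.mem_singleton] at hi hi1
      omega
    · intro i hi
      simp only [Finset.mem_singleton] at hi
      omega
    · simp [sval]
    · rintro ⟨_, h0, _⟩
      exact absurd (Finset.mem_singleton_self 0) h0

lemma FF1 : FF 1 := by
  intro s hs1 hs2
  have hl : lucas (2*1) = 3 := rfl
  have : s = 1 ∨ s = 2 := by omega
  have e0 : φ ^ (0:ℤ) = φ ^ (-1:ℤ) + φ ^ (-2:ℤ) := zphi' (by ring) (by ring)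
  have e1 : φ ^ (1:ℤ) = φ ^ (0:ℤ) + φ ^ (-1:ℤ) := zphi' (by ring) (by ring)
  have ez : φ ^ (0:ℤ) = 1 := zpow_zero φ
  rcases this with rfl | rfl
  · refine ⟨{-1}, ?_, ?_, ?_, ?_⟩
    · intro i hi hi1
      simp only [Finset.mem_singleton] at hi hi1
      omega
    · intro i hi
      simp only [Finset.mem_singleton] at hi
      omega
    · show sval {-1} = (1:ℕ) - φ ^ (-(2*((1:ℕ):ℤ)))
      have : sval {-1} = φ ^ (-1:ℤ) := by simp [sval]
      rw [this]
      push_cast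
      linear_combination ez - e0
    · rintro ⟨hm1, _, _⟩
      exact absurd (Finset.mem_singleton_self (-1)) hm1
  · refine ⟨{1}, ?_, ?_, ?_, ?_⟩
    · intro i hi hi1
      simp only [Finset.mem_singleton] at hi hi1
      omega
    · intro i hi
      simp only [Finset.mem_singleton] at hi
      omega
    · show sval {1} = (2:ℕ) - φ ^ (-(2*((1:ℕ):ℤ)))
      have : sval {1} = φ ^ (1:ℤ) := by simp [sval]
      rw [this]
      push_cast
      linear_combination e1 - e0 + 2*ez
    · rintro ⟨_, _, h1⟩
      exact absurd (Finset.mem_singleton_self 1) h1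

lemma zpe {i j : ℤ} (h : i = j) : φ ^ i = φ ^ j := by rw [h]

lemma natcast_eq {a b : ℕ} (h : a = b) : (a : ℝ) = (b : ℝ) := by exact_mod_cast h

lemma grand : ∀ k : ℕ, CC k ∧ (1 ≤ k → FF k) := by
  intro k
  induction k using Nat.strong_induction_on with
  | _ k ih =>
  cases k with
  | zero => exact ⟨CC0, by omega⟩
  | succ k =>
    constructor
    · -- CC (k+1)
      have ihCC : CC k := (ih k (by omega)).1
      intro N hN
      have hN' : N ≤ lucas (2*k+3) := by
        rwa [show 2*(k+1)+1 = 2*k+3 by ring] at hN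
      have L3 : lucas (2*k+3) = lucas (2*k+2) + lucas (2*k+1) := by
        have h := lucas_add_two (2*k+1)
        rwa [show 2*k+1+2 = 2*k+3 by ring, show 2*k+1+1 = 2*k+2 by ring] at h
      have L2 : lucas (2*k+2) = lucas (2*k+1) + lucas (2*k) := lucas_add_two (2*k)
      have hp21 := lucas_pos (2*k+1)
      have hp20 := lucas_pos (2*k)
      by_cases hA : N ≤ lucas (2*k+1)
      · obtain ⟨S, h1, h2, h3, h4⟩ := ihCC N hA
        refine ⟨S, h1, ?_, h3, ?_⟩
        · intro i hi; have := h2 i hi; push_cast at this ⊢; omega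
        · intro hg
          rcases h4 hg with h | ⟨T, t1, t2, t3, t4⟩
          · exact Or.inl h
          · refine Or.inr ⟨T, t1, ?_, t3, t4⟩
            intro i hi; have := t2 i hi; push_cast at this ⊢; omega
      · by_cases hB : lucas (2*k+2) ≤ N
        · -- case c : N = lucas (2k+2) + r
          have hrle : N - lucas (2*k+2) ≤ lucas (2*k+1) := by omega
          obtain ⟨S₀, h1, h2, h3, h4⟩ := ihCC (N - lucas (2*k+2)) hrle
          have hb := insert_bot (a := -(2*(k:ℤ)+2)) h1 (by
            intro i hi; have := h2 i hi; omega)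
          have ht := insert_top (a := 2*(k:ℤ)+2) hb.2.1 (by
            intro i hi
            rcases Finset.mem_insert.1 hi with rfl | hi
            · omega
            · have := h2 i hi; omega)
          have hle : (lucas (2*k+2) : ℝ) = φ ^ (2*(k:ℤ)+2) + φ ^ (-(2*(k:ℤ)+2)) :=
            lucas_even'' (2*k+2) (k+1) (by ring) _ _ (by push_cast; ring) (by push_cast; ring)
          have hNr : (N:ℝ) = (lucas (2*k+2) : ℝ) + ((N - lucas (2*k+2) : ℕ) : ℝ) := by
            have h : N = lucas (2*k+2) + (N - lucas (2*k+2)) := by omega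
            exact_mod_cast natcast_eq h
          refine ⟨insert (2*(k:ℤ)+2) (insert (-(2*(k:ℤ)+2)) S₀), ht.2.1, ?_, ?_, ?_⟩
          · intro i hi
            push_cast
            rcases Finset.mem_insert.1 hi with rfl | hi
            · omega
            rcases Finset.mem_insert.1 hi with rfl | hi
            · omega
            · have := h2 i hi; omega
          · rw [ht.2.2, hb.2.2, h3, hNr, hle]; ring
          · rintro ⟨hgm1, hg0, hg1⟩
            right
            have hg₀ : (-1:ℤ) ∉ S₀ ∧ (0:ℤ) ∉ S₀ ∧ (1:ℤ) ∉ S₀ :=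
              ⟨fun h => hgm1 (Finset.mem_insert_of_mem (Finset.mem_insert_of_mem h)),
               fun h => hg0 (Finset.mem_insert_of_mem (Finset.mem_insert_of_mem h)),
               fun h => hg1 (Finset.mem_insert_of_mem (Finset.mem_insert_of_mem h))⟩
            rcases h4 hg₀ with hr0 | ⟨T₀, t1, t2, t3, t4⟩
            · -- r = 0
              have hcb := insert_bot (a := -(2*(k:ℤ)+2)) (chain_nonadj k) (by
                intro i hi; have := chain_bdd hi; omega)
              refine ⟨insert (-(2*(k:ℤ)+2)) (chain k), hcb.2.1, ?_, ?_, ?_⟩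
              · intro i hi
                push_cast
                rcases Finset.mem_insert.1 hi with rfl | hi
                · omega
                · have := chain_bdd hi; omega
              · intro i hi
                rcases Finset.mem_insert.1 hi with rfl | hi
                · left; omega
                · right; exact (chain_bdd hi).1
              · have hN0 : (N:ℝ) = (lucas (2*k+2) : ℝ) := by
                  have h : N = lucas (2*k+2) := by omega
                  exact_mod_cast natcast_eq h
                rw [hcb.2.2, chain_sval k, hN0, hle]; ring
            · have hr2 : (2:ℝ) < ((N - lucas (2*k+2) : ℕ) : ℝ) := by
                have h1 := sval_nonneg T₀
                have h2 := two_lt_phisq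
                linarith [t4]
              have hr3 : 2 < N - lucas (2*k+2) := by exact_mod_cast hr2
              have hk1 : 1 ≤ k := by
                rcases Nat.eq_zero_or_pos k with rfl | h
                · have : lucas (2*0+1) = 1 := rfl
                  omega
                · exact h
              have hk1' : (1:ℤ) ≤ (k:ℤ) := by exact_mod_cast hk1
              have htb := insert_bot (a := -(2*(k:ℤ)+2)) t1 (by
                intro i hi; have := t2 i hi; omega)
              have htt := insert_top (a := 2*(k:ℤ)+2) htb.2.1 (by
                intro i hi
                rcases Finset.mem_insert.1 hi with rfl | hi
                · omega
                · have := t2 i hi; omega)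
              refine ⟨_, htt.2.1, ?_, ?_, ?_⟩
              · intro i hi
                push_cast
                rcases Finset.mem_insert.1 hi with rfl | hi
                · omega
                rcases Finset.mem_insert.1 hi with rfl | hi
                · omega
                · have := t2 i hi; omega
              · intro i hi
                rcases Finset.mem_insert.1 hi with rfl | hi
                · right; omega
                rcases Finset.mem_insert.1 hi with rfl | hi
                · left; omega
                · exact t3 i hi
              · rw [htt.2.2, htb.2.2, hNr, hle]
                linear_combination t4
        · -- case b : lucas (2k+1) < N < lucas (2k+2)
          push_neg at hA hB
          cases k with
          | zero =>
            have hl1 : lucas (2*0+1) = 1 := rfl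
            have hl2 : lucas (2*0+2) = 3 := rfl
            have hN2 : N = 2 := by omega
            subst hN2
            refine ⟨insert (1:ℤ) {(-2:ℤ)}, ?_, ?_, ?_, ?_⟩
            · intro i hi hi1
              simp only [Finset.mem_insert, Finset.mem_singleton] at hi hi1
              omega
            · intro i hi
              simp only [Finset.mem_insert, Finset.mem_singleton] at hi
              push_cast
              omega
            · have hns : (-2:ℤ) ∉ ({} : Finset ℤ) := by simp
              have hv : sval (insert (1:ℤ) {(-2:ℤ)}) = φ^(1:ℤ) + φ^(-2:ℤ) := by
                rw [sval_insert (by simp)]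
                have : sval {(-2:ℤ)} = φ^(-2:ℤ) := by simp [sval]
                rw [this]
              rw [hv]
              have e0 : φ ^ (0:ℤ) = φ ^ (-1:ℤ) + φ ^ (-2:ℤ) := zphi' (by ring) (by ring)
              have e1 : φ ^ (1:ℤ) = φ ^ (0:ℤ) + φ ^ (-1:ℤ) := zphi' (by ring) (by ring)
              have ez : φ ^ (0:ℤ) = 1 := zpow_zero φ
              push_cast
              linear_combination e1 - e0 + 2*ez
            · rintro ⟨_, _, h1⟩
              exact absurd (Finset.mem_insert_self 1 _) h1
          | succ k' =>
            have ihFF : FF (k'+1) := (ih (k'+1) (by omega)).2 (by omega)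
            have hA' : lucas (2*k'+3) < N := by
              rwa [show 2*(k'+1)+1 = 2*k'+3 by ring] at hA
            have hB' : N < lucas (2*k'+4) := by
              rwa [show 2*(k'+1)+2 = 2*k'+4 by ring] at hB
            have L4' : lucas (2*k'+4) = lucas (2*k'+3) + lucas (2*k'+2) := by
              have h := lucas_add_two (2*k'+2)
              rwa [show 2*k'+2+2 = 2*k'+4 by ring, show 2*k'+2+1 = 2*k'+3 by ring] at h
            have hs1 : 1 ≤ N - lucas (2*k'+3) := by omega
            have hs2 : N - lucas (2*k'+3) ≤ lucas (2*(k'+1)) - 1 := by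
              rw [show 2*(k'+1) = 2*k'+2 by ring]; omega
            obtain ⟨S₀, f1, f2, f3, f4⟩ := ihFF (N - lucas (2*k'+3)) hs1 hs2
            rw [zpe (show -(2*(((k'+1):ℕ)):ℤ) = -(2*(k':ℤ)+2) by push_cast; ring)] at f3
            have f2' : ∀ i ∈ S₀, -(2*(k':ℤ))-1 ≤ i ∧ i ≤ 2*(k':ℤ)+1 := by
              intro i hi; have := f2 i hi; push_cast at this; omega
            have hb := insert_bot (a := -(2*(k':ℤ)+4)) f1 (by
              intro i hi; have := f2' i hi; omega)
            have ht := insert_top (a := 2*(k':ℤ)+3) hb.2.1 (by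
              intro i hi
              rcases Finset.mem_insert.1 hi with rfl | hi
              · omega
              · have := f2' i hi; omega)
            have hlodd : (lucas (2*k'+3) : ℝ) = φ ^ (2*(k':ℤ)+3) - φ ^ (-(2*(k':ℤ)+3)) :=
              lucas_odd'' (2*k'+3) (k'+1) (by ring) _ _ (by push_cast; ring) (by push_cast; ring)
            have ezp : φ ^ (-(2*(k':ℤ)+2)) = φ ^ (-(2*(k':ℤ)+3)) + φ ^ (-(2*(k':ℤ)+4)) :=
              zphi' (by ring) (by ring)
            have hNs : (N:ℝ) = (lucas (2*k'+3) : ℝ) + ((N - lucas (2*k'+3) : ℕ) : ℝ) := by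
              have h : N = lucas (2*k'+3) + (N - lucas (2*k'+3)) := by omega
              exact_mod_cast natcast_eq h
            refine ⟨insert (2*(k':ℤ)+3) (insert (-(2*(k':ℤ)+4)) S₀), ht.2.1, ?_, ?_, ?_⟩
            · intro i hi
              push_cast
              rcases Finset.mem_insert.1 hi with rfl | hi
              · omega
              rcases Finset.mem_insert.1 hi with rfl | hi
              · omega
              · have := f2' i hi; omega
            · rw [ht.2.2, hb.2.2, f3, hNs, hlodd]
              linear_combination -ezp
            · rintro ⟨hgm1, hg0, hg1⟩
              right
              have hg₀ : (-1:ℤ) ∉ S₀ ∧ (0:ℤ) ∉ S₀ ∧ (1:ℤ) ∉ S₀ :=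
                ⟨fun h => hgm1 (Finset.mem_insert_of_mem (Finset.mem_insert_of_mem h)),
                 fun h => hg0 (Finset.mem_insert_of_mem (Finset.mem_insert_of_mem h)),
                 fun h => hg1 (Finset.mem_insert_of_mem (Finset.mem_insert_of_mem h))⟩
              obtain ⟨T₀, t1, t2, t3, t4⟩ := f4 hg₀
              rw [zpe (show -(2*(((k'+1):ℕ)):ℤ) = -(2*(k':ℤ)+2) by push_cast; ring)] at t4
              have t2' : ∀ i ∈ T₀, -(2*(k':ℤ))-1 ≤ i ∧ i ≤ 2*(k':ℤ)+1 := by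
                intro i hi; have := t2 i hi; push_cast at this; omega
              have htb := insert_bot (a := -(2*(k':ℤ)+4)) t1 (by
                intro i hi; have := t2' i hi; omega)
              have htt := insert_top (a := 2*(k':ℤ)+3) htb.2.1 (by
                intro i hi
                rcases Finset.mem_insert.1 hi with rfl | hi
                · omega
                · have := t2' i hi; omega)
              refine ⟨_, htt.2.1, ?_, ?_, ?_⟩
              · intro i hi
                push_cast
                rcases Finset.mem_insert.1 hi with rfl | hi
                · omega
                rcases Finset.mem_insert.1 hi with rfl | hi
                · omega
                · have := t2' i hi; omega
              · intro i hi
                rcases Finset.mem_insert.1 hi with rfl | hi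
                · right; omega
                rcases Finset.mem_insert.1 hi with rfl | hi
                · left; omega
                · exact t3 i hi
              · rw [htt.2.2, htb.2.2, hNs, hlodd]
                linear_combination t4 - ezp
    · -- FF (k+1)
      intro _
      cases k with
      | zero => exact FF1
      | succ k' =>
        intro s hs1 hs2
        rw [zpe (show -(2*(((k'+1+1):ℕ)):ℤ) = -(2*(k':ℤ)+4) by push_cast; ring)]
        rw [show 2*(k'+1+1) = 2*k'+4 by ring] at hs2
        have L4' : lucas (2*k'+4) = lucas (2*k'+3) + lucas (2*k'+2) := by
          have h := lucas_add_two (2*k'+2)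
          rwa [show 2*k'+2+2 = 2*k'+4 by ring, show 2*k'+2+1 = 2*k'+3 by ring] at h
        have L3' : lucas (2*k'+3) = lucas (2*k'+2) + lucas (2*k'+1) := by
          have h := lucas_add_two (2*k'+1)
          rwa [show 2*k'+1+2 = 2*k'+3 by ring, show 2*k'+1+1 = 2*k'+2 by ring] at h
        have L2' : lucas (2*k'+2) = lucas (2*k'+1) + lucas (2*k') := lucas_add_two (2*k')
        have hp1 := lucas_pos (2*k'+1)
        have hp0 := lucas_pos (2*k')
        have ezp : φ ^ (-(2*(k':ℤ)+2)) = φ ^ (-(2*(k':ℤ)+3)) + φ ^ (-(2*(k':ℤ)+4)) :=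
          zphi' (by ring) (by ring)
        by_cases hc1 : s ≤ lucas (2*k'+2) - 1
        · -- case 1
          obtain ⟨S₀, f1, f2, f3, f4⟩ := (ih (k'+1) (by omega)).2 (by omega) s hs1 (by
            rw [show 2*(k'+1) = 2*k'+2 by ring]; omega)
          rw [zpe (show -(2*(((k'+1):ℕ)):ℤ) = -(2*(k':ℤ)+2) by push_cast; ring)] at f3
          have f2' : ∀ i ∈ S₀, -(2*(k':ℤ))-1 ≤ i ∧ i ≤ 2*(k':ℤ)+1 := by
            intro i hi; have := f2 i hi; push_cast at this; omega
          have hb := insert_bot (a := -(2*(k':ℤ)+3)) f1 (by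
            intro i hi; have := f2' i hi; omega)
          refine ⟨insert (-(2*(k':ℤ)+3)) S₀, hb.2.1, ?_, ?_, ?_⟩
          · intro i hi
            push_cast
            rcases Finset.mem_insert.1 hi with rfl | hi
            · omega
            · have := f2' i hi; omega
          · rw [hb.2.2, f3]
            linear_combination -ezp
          · rintro ⟨hgm1, hg0, hg1⟩
            have hg₀ : (-1:ℤ) ∉ S₀ ∧ (0:ℤ) ∉ S₀ ∧ (1:ℤ) ∉ S₀ :=
              ⟨fun h => hgm1 (Finset.mem_insert_of_mem h),
               fun h => hg0 (Finset.mem_insert_of_mem h),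
               fun h => hg1 (Finset.mem_insert_of_mem h)⟩
            obtain ⟨T₀, t1, t2, t3, t4⟩ := f4 hg₀
            rw [zpe (show -(2*(((k'+1):ℕ)):ℤ) = -(2*(k':ℤ)+2) by push_cast; ring)] at t4
            have t2' : ∀ i ∈ T₀, -(2*(k':ℤ))-1 ≤ i ∧ i ≤ 2*(k':ℤ)+1 := by
              intro i hi; have := t2 i hi; push_cast at this; omega
            have htb := insert_bot (a := -(2*(k':ℤ)+3)) t1 (by
              intro i hi; have := t2' i hi; omega)
            refine ⟨_, htb.2.1, ?_, ?_, ?_⟩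
            · intro i hi
              push_cast
              rcases Finset.mem_insert.1 hi with rfl | hi
              · omega
              · have := t2' i hi; omega
            · intro i hi
              rcases Finset.mem_insert.1 hi with rfl | hi
              · left; omega
              · exact t3 i hi
            · rw [htb.2.2]
              linear_combination t4 - ezp
        · by_cases hc2 : s ≤ lucas (2*k'+3)
          · -- case 3
            have hs' : s - lucas (2*k'+2) ≤ lucas (2*k'+1) := by omega
            obtain ⟨S₀, c1, c2, c3, c4⟩ := (ih k' (by omega)).1 (s - lucas (2*k'+2)) hs'
            have hb := insert_bot (a := -(2*(k':ℤ)+3)) c1 (by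
              intro i hi; have := c2 i hi; omega)
            have ht := insert_top (a := 2*(k':ℤ)+2) hb.2.1 (by
              intro i hi
              rcases Finset.mem_insert.1 hi with rfl | hi
              · omega
              · have := c2 i hi; omega)
            have heven : (lucas (2*k'+2) : ℝ) = φ ^ (2*(k':ℤ)+2) + φ ^ (-(2*(k':ℤ)+2)) :=
              lucas_even'' (2*k'+2) (k'+1) (by ring) _ _ (by push_cast; ring) (by push_cast; ring)
            have hss : (s:ℝ) = (lucas (2*k'+2) : ℝ) + ((s - lucas (2*k'+2) : ℕ) : ℝ) := by
              have h : s = lucas (2*k'+2) + (s - lucas (2*k'+2)) := by omega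
              exact_mod_cast natcast_eq h
            refine ⟨insert (2*(k':ℤ)+2) (insert (-(2*(k':ℤ)+3)) S₀), ht.2.1, ?_, ?_, ?_⟩
            · intro i hi
              push_cast
              rcases Finset.mem_insert.1 hi with rfl | hi
              · omega
              rcases Finset.mem_insert.1 hi with rfl | hi
              · omega
              · have := c2 i hi; omega
            · rw [ht.2.2, hb.2.2, c3, hss, heven]
              linear_combination -ezp
            · rintro ⟨hgm1, hg0, hg1⟩
              have hg₀ : (-1:ℤ) ∉ S₀ ∧ (0:ℤ) ∉ S₀ ∧ (1:ℤ) ∉ S₀ :=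
                ⟨fun h => hgm1 (Finset.mem_insert_of_mem (Finset.mem_insert_of_mem h)),
                 fun h => hg0 (Finset.mem_insert_of_mem (Finset.mem_insert_of_mem h)),
                 fun h => hg1 (Finset.mem_insert_of_mem (Finset.mem_insert_of_mem h))⟩
              rcases c4 hg₀ with hz | ⟨T₀, t1, t2, t3, t4⟩
              · -- s' = 0
                have hcb := insert_bot (a := -(2*(k':ℤ)+3)) (chain_nonadj k') (by
                  intro i hi; have := chain_bdd hi; omega)
                refine ⟨insert (-(2*(k':ℤ)+3)) (chain k'), hcb.2.1, ?_, ?_, ?_⟩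
                · intro i hi
                  push_cast
                  rcases Finset.mem_insert.1 hi with rfl | hi
                  · omega
                  · have := chain_bdd hi; omega
                · intro i hi
                  rcases Finset.mem_insert.1 hi with rfl | hi
                  · left; omega
                  · right; exact (chain_bdd hi).1
                · have hs0 : (s:ℝ) = (lucas (2*k'+2) : ℝ) := by
                    have h : s = lucas (2*k'+2) := by omega
                    exact_mod_cast natcast_eq h
                  rw [hcb.2.2, chain_sval k', hs0, heven]
                  linear_combination -ezp
              · have hr2 : (2:ℝ) < ((s - lucas (2*k'+2) : ℕ) : ℝ) := by
                  have h1 := sval_nonneg T₀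
                  have h2 := two_lt_phisq
                  linarith [t4]
                have hr3 : 2 < s - lucas (2*k'+2) := by exact_mod_cast hr2
                have hk1 : 1 ≤ k' := by
                  rcases Nat.eq_zero_or_pos k' with rfl | h
                  · have : lucas (2*0+1) = 1 := rfl
                    omega
                  · exact h
                have hk1' : (1:ℤ) ≤ (k':ℤ) := by exact_mod_cast hk1
                have htb := insert_bot (a := -(2*(k':ℤ)+3)) t1 (by
                  intro i hi; have := t2 i hi; omega)
                have htt := insert_top (a := 2*(k':ℤ)+2) htb.2.1 (by
                  intro i hi
                  rcases Finset.mem_insert.1 hi with rfl | hi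
                  · omega
                  · have := t2 i hi; omega)
                refine ⟨_, htt.2.1, ?_, ?_, ?_⟩
                · intro i hi
                  push_cast
                  rcases Finset.mem_insert.1 hi with rfl | hi
                  · omega
                  rcases Finset.mem_insert.1 hi with rfl | hi
                  · omega
                  · have := t2 i hi; omega
                · intro i hi
                  rcases Finset.mem_insert.1 hi with rfl | hi
                  · right; omega
                  rcases Finset.mem_insert.1 hi with rfl | hi
                  · left; omega
                  · exact t3 i hi
                · rw [htt.2.2, htb.2.2, hss, heven]
                  linear_combination t4 - ezp
          · -- case 4
            have hs1' : 1 ≤ s - lucas (2*k'+3) := by omega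
            have hs2' : s - lucas (2*k'+3) ≤ lucas (2*(k'+1)) - 1 := by
              rw [show 2*(k'+1) = 2*k'+2 by ring]; omega
            obtain ⟨S₀, f1, f2, f3, f4⟩ := (ih (k'+1) (by omega)).2 (by omega) (s - lucas (2*k'+3)) hs1' hs2'
            rw [zpe (show -(2*(((k'+1):ℕ)):ℤ) = -(2*(k':ℤ)+2) by push_cast; ring)] at f3
            have f2' : ∀ i ∈ S₀, -(2*(k':ℤ))-1 ≤ i ∧ i ≤ 2*(k':ℤ)+1 := by
              intro i hi; have := f2 i hi; push_cast at this; omega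
            have ht := insert_top (a := 2*(k':ℤ)+3) f1 (by
              intro i hi; have := f2' i hi; omega)
            have hlodd : (lucas (2*k'+3) : ℝ) = φ ^ (2*(k':ℤ)+3) - φ ^ (-(2*(k':ℤ)+3)) :=
              lucas_odd'' (2*k'+3) (k'+1) (by ring) _ _ (by push_cast; ring) (by push_cast; ring)
            have hss : (s:ℝ) = (lucas (2*k'+3) : ℝ) + ((s - lucas (2*k'+3) : ℕ) : ℝ) := by
              have h : s = lucas (2*k'+3) + (s - lucas (2*k'+3)) := by omega
              exact_mod_cast natcast_eq h
            refine ⟨insert (2*(k':ℤ)+3) S₀, ht.2.1, ?_, ?_, ?_⟩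
            · intro i hi
              push_cast
              rcases Finset.mem_insert.1 hi with rfl | hi
              · omega
              · have := f2' i hi; omega
            · rw [ht.2.2, f3, hss, hlodd]
              linear_combination -ezp
            · rintro ⟨hgm1, hg0, hg1⟩
              have hg₀ : (-1:ℤ) ∉ S₀ ∧ (0:ℤ) ∉ S₀ ∧ (1:ℤ) ∉ S₀ :=
                ⟨fun h => hgm1 (Finset.mem_insert_of_mem h),
                 fun h => hg0 (Finset.mem_insert_of_mem h),
                 fun h => hg1 (Finset.mem_insert_of_mem h)⟩
              obtain ⟨T₀, t1, t2, t3, t4⟩ := f4 hg₀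
              rw [zpe (show -(2*(((k'+1):ℕ)):ℤ) = -(2*(k':ℤ)+2) by push_cast; ring)] at t4
              have t2' : ∀ i ∈ T₀, -(2*(k':ℤ))-1 ≤ i ∧ i ≤ 2*(k':ℤ)+1 := by
                intro i hi; have := t2 i hi; push_cast at this; omega
              have htt := insert_top (a := 2*(k':ℤ)+3) t1 (by
                intro i hi; have := t2' i hi; omega)
              refine ⟨_, htt.2.1, ?_, ?_, ?_⟩
              · intro i hi
                push_cast
                rcases Finset.mem_insert.1 hi with rfl | hi
                · omega
                · have := t2' i hi; omega
              · intro i hi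
                rcases Finset.mem_insert.1 hi with rfl | hi
                · right; omega
                · exact t3 i hi
              · rw [htt.2.2, hss, hlodd]
                linear_combination t4 - ezp

/-! ### Finsupp conversions -/

def toRep (D : Finset ℤ) : ℤ →₀ ℕ where
  support := D
  toFun i := if i ∈ D then 1 else 0
  mem_support_toFun i := by simp

lemma toRep_apply (D : Finset ℤ) (i : ℤ) : toRep D i = if i ∈ D then 1 else 0 := rfl

lemma toRep_sum (D : Finset ℤ) : ((toRep D).sum fun i a => (a : ℝ) * φ ^ i) = sval D := by
  show (∑ i ∈ D, ((toRep D i : ℕ) : ℝ) * φ ^ i) = sval D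
  apply Finset.sum_congr rfl
  intro i hi
  rw [toRep_apply, if_pos hi]
  push_cast
  ring

lemma rep_eq_toRep {c : ℤ →₀ ℕ} (hd : ∀ i, c i ≤ 1) : c = toRep c.support := by
  ext i
  rw [toRep_apply]
  by_cases h : i ∈ c.support
  · rw [if_pos h]
    have h1 := Finsupp.mem_support_iff.1 h
    have h2 := hd i
    omega
  · rw [if_neg h]
    exact Finsupp.notMem_support_iff.1 h

lemma sum_eq_sval {c : ℤ →₀ ℕ} (hd : ∀ i, c i ≤ 1) :
    (c.sum fun i a => (a : ℝ) * φ ^ i) = sval c.support := by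
  have h := toRep_sum c.support
  rw [← rep_eq_toRep hd] at h
  exact h

lemma support_nonadj {c : ℤ →₀ ℕ} (h : ∀ i : ℤ, c (i+1) * c i = 0) : Nonadj c.support := by
  intro i hi hi1
  have h1 := Finsupp.mem_support_iff.1 hi
  have h2 := Finsupp.mem_support_iff.1 hi1
  have h3 := h i
  rcases Nat.mul_eq_zero.1 h3 with h4 | h4
  · exact h2 h4
  · exact h1 h4

lemma isBergman_toRep {N : ℕ} {D : Finset ℤ} (hna : Nonadj D) (hv : sval D = N) :
    IsBergman N (toRep D) := by
  refine ⟨⟨fun i => ?_, by rw [toRep_sum, hv]⟩, fun i => ?_⟩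
  · rw [toRep_apply]; split <;> omega
  · rw [toRep_apply, toRep_apply]
    by_cases h1 : i ∈ D
    · rw [if_neg (fun h => hna i h1 h)]
      ring
    · rw [if_neg h1, mul_zero]

lemma bergman_unique {N : ℕ} {c c' : ℤ →₀ ℕ} (h : IsBergman N c) (h' : IsBergman N c') :
    c = c' := by
  have hd := h.1.1
  have hd' := h'.1.1
  have e1 : sval c.support = sval c'.support := by
    rw [← sum_eq_sval hd, ← sum_eq_sval hd', h.1.2, h'.1.2]
  have e2 : c.support = c'.support :=
    sval_inj (support_nonadj h.2) (support_nonadj h'.2) e1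
  rw [rep_eq_toRep hd, rep_eq_toRep hd', e2]

lemma bergmanRep_eq {N : ℕ} {c : ℤ →₀ ℕ} (h : IsBergman N c) : bergmanRep N = c := by
  have hex : ∃ c, IsBergman N c := ⟨c, h⟩
  rw [bergmanRep, dif_pos hex]
  exact bergman_unique hex.choose_spec h

/-! ### The carry cascade -/

lemma cascade : ∀ (n : ℕ) (a : ℤ) (S : Finset ℤ), S.card ≤ n → 2 ≤ a → Nonadj S →
    (∀ j ∈ S, j ≤ -2 ∨ a + 1 ≤ j) →
    ∃ D : Finset ℤ, Nonadj D ∧ (∀ j ∈ D, j ≤ -2 ∨ 2 ≤ j) ∧ sval D = φ ^ a + sval S := by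
  intro n
  induction n with
  | zero =>
    intro a S hc h2 _ _
    have hS : S = ∅ := Finset.card_eq_zero.1 (Nat.le_zero.1 hc)
    subst hS
    refine ⟨{a}, ?_, ?_, ?_⟩
    · intro i hi hi1
      simp only [Finset.mem_singleton] at hi hi1
      omega
    · intro j hj
      simp only [Finset.mem_singleton] at hj
      right; omega
    · simp [sval, sval_empty]
  | succ n ih =>
    intro a S hc h2 hna hel
    by_cases hmem : a + 1 ∈ S
    · have hcard : (S.erase (a+1)).card ≤ n := by
        have := Finset.card_erase_of_mem hmem
        have : 0 < S.card := Finset.card_pos.2 ⟨a+1, hmem⟩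
        omega
      have hel' : ∀ j ∈ S.erase (a+1), j ≤ -2 ∨ (a+2) + 1 ≤ j := by
        intro j hj
        have h1 : j ∈ S := Finset.mem_of_mem_erase hj
        have h2' : j ≠ a+1 := Finset.ne_of_mem_erase hj
        have h3 : j ≠ a+2 := by
          intro he
          exact hna (a+1) hmem (by rw [show a+1+1 = a+2 by ring]; exact he ▸ h1)
        rcases hel j h1 with h | h
        · exact Or.inl h
        · right; omega
      obtain ⟨D, d1, d2, d3⟩ := ih (a+2) (S.erase (a+1)) hcard (by omega)
        (nonadj_subset (Finset.erase_subset _ _) hna) hel'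
      refine ⟨D, d1, d2, ?_⟩
      have hsp : sval S = φ ^ (a+1) + sval (S.erase (a+1)) :=
        (Finset.add_sum_erase S _ hmem).symm
      have e : φ ^ (a+2) = φ ^ (a+1) + φ ^ a := zphi a
      rw [d3, hsp, e]
      ring
    · refine ⟨insert a S, ?_, ?_, ?_⟩
      · intro i hi hi1
        rcases Finset.mem_insert.1 hi with rfl | hi
        · rcases Finset.mem_insert.1 hi1 with h | h
          · omega
          · exact hmem h
        · rcases Finset.mem_insert.1 hi1 with h | h
          · rcases hel i hi with h' | h' <;> omega
          · exact hna i hi h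
      · intro j hj
        rcases Finset.mem_insert.1 hj with rfl | hj
        · right; omega
        · rcases hel j hj with h | h
          · exact Or.inl h
          · right; omega
      · have hnm : a ∉ S := by
          intro h
          rcases hel a h with h' | h' <;> omega
        rw [sval_insert hnm]

end StmtAux

open StmtAux in
theorem stmt0 (N : ℕ) (hN : 0 < N) :
    (∃ c : ℤ →₀ ℕ, IsAdmissible N c ∧ c 1 = 1 ∧ c 0 = 1) ↔
      (bergmanRep N 1 = 0 ∧ bergmanRep N 0 = 0 ∧ bergmanRep N (-1) = 0) := by
  constructor
  · rintro ⟨c, ⟨⟨hdig, hsum⟩, hpair⟩, hc1, hc0⟩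
    have hc2 : c 2 = 0 := by
      have h := hpair 1 one_ne_zero
      rw [show (1:ℤ)+1 = 2 by norm_num, hc1, mul_one] at h
      exact h
    have hcm1 : c (-1) = 0 := by
      have h := hpair (-1) (by norm_num)
      rw [show (-1:ℤ)+1 = 0 by norm_num, hc0, one_mul] at h
      exact h
    set S : Finset ℤ := c.support \ {0, 1} with hSdef
    have hmemS : ∀ i : ℤ, i ∈ S ↔ (c i ≠ 0 ∧ i ≠ 0 ∧ i ≠ 1) := by
      intro i
      rw [hSdef, Finset.mem_sdiff, Finset.mem_insert, Finset.mem_singleton,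
        Finsupp.mem_support_iff]
      tauto
    have hSel : ∀ j ∈ S, j ≤ -2 ∨ (2:ℤ) + 1 ≤ j := by
      intro j hj
      rw [hmemS] at hj
      obtain ⟨hne, h0, h1⟩ := hj
      have hjm1 : j ≠ -1 := by intro h; subst h; exact hne hcm1
      have hj2 : j ≠ 2 := by intro h; subst h; exact hne hc2
      omega
    have hSna : Nonadj S := by
      intro i hi hi1
      rw [hmemS] at hi hi1
      have h := hpair i hi.2.1
      rcases Nat.mul_eq_zero.1 h with h' | h'
      · exact hi1.1 h'
      · exact hi.1 h'
    have h1nS : (1:ℤ) ∉ S := fun h => ((hmemS 1).1 h).2.2 rfl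
    have h0nS : (0:ℤ) ∉ S := fun h => ((hmemS 0).1 h).2.1 rfl
    have h0n : (0:ℤ) ∉ insert 1 S := by
      rw [Finset.mem_insert]
      rintro (h | h)
      · norm_num at h
      · exact h0nS h
    have hsupp : c.support = insert 0 (insert 1 S) := by
      ext i
      rw [Finset.mem_insert, Finset.mem_insert, hmemS i, Finsupp.mem_support_iff]
      constructor
      · intro h
        by_cases h0 : i = 0
        · exact Or.inl h0
        by_cases h1 : i = 1
        · exact Or.inr (Or.inl h1)
        · exact Or.inr (Or.inr ⟨h, h0, h1⟩)
      · rintro (rfl | rfl | ⟨h, _, _⟩)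
        · rw [hc0]; norm_num
        · rw [hc1]; norm_num
        · exact h
    have e1 : sval c.support = goldenPhi ^ (0:ℤ) + (goldenPhi ^ (1:ℤ) + sval S) := by
      rw [hsupp, sval_insert h0n, sval_insert h1nS]
    have hNv : goldenPhi ^ (2:ℤ) + sval S = (N:ℝ) := by
      rw [← hsum, sum_eq_sval hdig, e1, zphi_two, zpow_one, zpow_zero]
      ring
    obtain ⟨D, hDna, hDel, hDval⟩ := cascade S.card 2 S le_rfl (by norm_num) hSna hSel
    have hDN : sval D = (N:ℝ) := by rw [hDval, hNv]
    have hB := isBergman_toRep hDna hDN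
    rw [bergmanRep_eq hB]
    refine ⟨?_, ?_, ?_⟩
    · rw [toRep_apply, if_neg (fun h => by rcases hDel 1 h with h' | h' <;> omega)]
    · rw [toRep_apply, if_neg (fun h => by rcases hDel 0 h with h' | h' <;> omega)]
    · rw [toRep_apply, if_neg (fun h => by rcases hDel (-1) h with h' | h' <;> omega)]
  · rintro ⟨h1, h0, hm1⟩
    have hluc : N ≤ lucas (2*N+1) := by
      have := le_lucas_odd N
      omega
    obtain ⟨S, g1, g2, g3, g4⟩ := (grand N).1 N hluc
    have hB := isBergman_toRep g1 g3
    have hbr := bergmanRep_eq hB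
    rw [hbr] at h1 h0 hm1
    have h1' : (1:ℤ) ∉ S := by
      intro h; rw [toRep_apply, if_pos h] at h1; exact one_ne_zero h1
    have h0' : (0:ℤ) ∉ S := by
      intro h; rw [toRep_apply, if_pos h] at h0; exact one_ne_zero h0
    have hm1' : (-1:ℤ) ∉ S := by
      intro h; rw [toRep_apply, if_pos h] at hm1; exact one_ne_zero hm1
    rcases g4 ⟨hm1', h0', h1'⟩ with h | ⟨T, t1, _, t3, t4⟩
    · omega
    · have h1T : (1:ℤ) ∉ T := fun h => by rcases t3 1 h with h' | h' <;> omega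
      have h0T : (0:ℤ) ∉ T := fun h => by rcases t3 0 h with h' | h' <;> omega
      have hm1T : (-1:ℤ) ∉ T := fun h => by rcases t3 (-1) h with h' | h' <;> omega
      have h2T : (2:ℤ) ∉ T := fun h => by rcases t3 2 h with h' | h' <;> omega
      have h0n : (0:ℤ) ∉ insert 1 T := by
        rw [Finset.mem_insert]
        rintro (h | h)
        · norm_num at h
        · exact h0T h
      have hUmem : ∀ i : ℤ, i ∈ insert (0:ℤ) (insert 1 T) ↔ i = 0 ∨ i = 1 ∨ i ∈ T := by
        intro i
        rw [Finset.mem_insert, Finset.mem_insert]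
      refine ⟨toRep (insert (0:ℤ) (insert 1 T)),
        ⟨⟨fun i => by rw [toRep_apply]; split <;> omega, ?_⟩, ?_⟩, ?_, ?_⟩
      · rw [toRep_sum, sval_insert h0n, sval_insert h1T, zpow_zero, zpow_one]
        have h2 := zphi_two
        linear_combination t4 - h2
      · intro i hi
        rw [toRep_apply, toRep_apply]
        by_cases hA : i + 1 ∈ insert (0:ℤ) (insert 1 T)
        · by_cases hBm : i ∈ insert (0:ℤ) (insert 1 T)
          · exfalso
            rcases (hUmem i).1 hBm with rfl | rfl | hiT
            · exact hi rfl
            · rw [show (1:ℤ)+1 = 2 by norm_num] at hA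
              rcases (hUmem 2).1 hA with h | h | h
              · norm_num at h
              · norm_num at h
              · exact h2T h
            · rcases (hUmem (i+1)).1 hA with h | h | h
              · have he : i = -1 := by omega
                rw [he] at hiT
                exact hm1T hiT
              · have he : i = 0 := by omega
                rw [he] at hiT
                exact h0T hiT
              · exact t1 i hiT h
          · rw [if_neg hBm, mul_zero]
        · rw [if_neg hA, zero_mul]
      · rw [toRep_apply, if_pos ((hUmem 1).2 (Or.inr (Or.inl rfl)))]
      · rw [toRep_apply, if_pos ((hUmem 0).2 (Or.inl rfl))]
end
end

section
/- Every positive integer N has exactly one admissible phi-representation c with the following property: either c(1) = c(0) = 1, or no admissible phi-representation of N has digit 1 at both positions 1 and 0. (This representation is called the canonical representation of N.) -/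
noncomputable section

attribute [local instance] Classical.propDecidable

namespace PhiRepAux

open Finset

lemma gphi_pos : (0:ℝ) < goldenPhi := Real.goldenRatio_pos

lemma gphi_ne : goldenPhi ≠ 0 := Real.goldenRatio_ne_zero

lemma one_lt_gphi : 1 < goldenPhi := Real.one_lt_goldenRatio

lemma gphi_zpow_pos (i : ℤ) : 0 < goldenPhi ^ i := zpow_pos gphi_pos i

/-- The fundamental recurrence φ^(i+2) = φ^(i+1) + φ^i. -/
lemma gphi_rec (i : ℤ) : goldenPhi ^ (i + 2) = goldenPhi ^ (i + 1) + goldenPhi ^ i := by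
  have h2 : goldenPhi ^ (2:ℤ) = goldenPhi + 1 := by
    rw [show (2:ℤ) = ((2:ℕ):ℤ) by norm_num, zpow_natCast]
    exact Real.goldenRatio_sq
  have h1 : goldenPhi ^ (i + 1) = goldenPhi ^ i * goldenPhi := zpow_add_one₀ gphi_ne i
  have h : goldenPhi ^ (i + 2) = goldenPhi ^ i * goldenPhi ^ (2:ℤ) :=
    (zpow_add₀ gphi_ne i 2)
  rw [h, h2, h1]; ring

/-- A sparse set of exponents: no two consecutive integers. -/
def SpS (S : Finset ℤ) : Prop := ∀ i ∈ S, i + 1 ∉ S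

/-- The real value of a set of exponents. -/
def valS (S : Finset ℤ) : ℝ := ∑ i ∈ S, goldenPhi ^ i

lemma SpS.subset {S T : Finset ℤ} (hT : T ⊆ S) (hS : SpS S) : SpS T := by
  intro i hi h1
  exact hS i (hT hi) (hT h1)

lemma valS_nonneg (S : Finset ℤ) : 0 ≤ valS S :=
  Finset.sum_nonneg fun i _ => (gphi_zpow_pos i).le

lemma valS_pos {S : Finset ℤ} (h : S.Nonempty) : 0 < valS S :=
  Finset.sum_pos (fun i _ => gphi_zpow_pos i) h

lemma valS_erase {S : Finset ℤ} {a : ℤ} (h : a ∈ S) :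
    valS (S.erase a) = valS S - goldenPhi ^ a := by
  have := Finset.add_sum_erase S (fun i => goldenPhi ^ i) h
  unfold valS
  linarith [this]

/-- Key bound: a sparse set of exponents all ≤ m has value < φ^(m+1). -/
lemma valS_lt : ∀ n (S : Finset ℤ), S.card ≤ n → SpS S → ∀ m : ℤ,
    (∀ j ∈ S, j ≤ m) → valS S < goldenPhi ^ (m + 1) := by
  intro n
  induction n with
  | zero =>
    intro S hcard _ m _
    have : S = ∅ := Finset.card_eq_zero.mp (Nat.le_zero.mp hcard)
    rw [this]
    simpa [valS] using gphi_zpow_pos (m + 1)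
  | succ n ih =>
    intro S hcard hS m hm
    rcases S.eq_empty_or_nonempty with rfl | hne
    · simpa [valS] using gphi_zpow_pos (m + 1)
    · set k := S.max' hne with hk
      have hkS : k ∈ S := S.max'_mem hne
      have hkm : k ≤ m := hm k hkS
      have hsub : ∀ j ∈ S.erase k, j ≤ k - 2 := by
        intro j hj
        have hjS := Finset.mem_of_mem_erase hj
        have hjk : j ≤ k := S.le_max' j hjS
        have hjne : j ≠ k := Finset.ne_of_mem_erase hj
        have : j ≠ k - 1 := by
          intro h
          apply hS j hjS
          rw [h]; simpa using hkS
        omega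
      have hcard' : (S.erase k).card ≤ n := by
        have := Finset.card_erase_of_mem hkS
        omega
      have ihv := ih (S.erase k) hcard' (SpS.subset (Finset.erase_subset _ _) hS)
        (k - 2) hsub
      have hval : valS S = goldenPhi ^ k + valS (S.erase k) := by
        rw [valS_erase hkS]; ring
      have hrec : goldenPhi ^ (k - 2 + 1) + goldenPhi ^ k = goldenPhi ^ (k + 1) := by
        have := gphi_rec (k - 1)
        have e1 : k - 1 + 2 = k + 1 := by ring
        have e2 : k - 1 + 1 = k := by ring
        have e3 : k - 2 + 1 = k - 1 := by ring
        rw [e1, e2] at this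
        rw [e3]
        linarith
      have hmono : goldenPhi ^ (k + 1) ≤ goldenPhi ^ (m + 1) :=
        zpow_le_zpow_right₀ one_lt_gphi.le (by omega)
      linarith
  
/-- Uniqueness: sparse sets with equal values are equal. -/
lemma valS_inj : ∀ n (S T : Finset ℤ), S.card ≤ n → SpS S → SpS T →
    valS S = valS T → S = T := by
  have key : ∀ (A B : Finset ℤ) (hA : A.Nonempty) (hB : B.Nonempty), SpS A →
      valS A = valS B → A.max' hA < B.max' hB → False := by
    intro A B hA hB hSA hval hlt
    have h1 : valS A < goldenPhi ^ (A.max' hA + 1) :=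
      valS_lt A.card A le_rfl hSA _ (fun j hj => A.le_max' j hj)
    have h2 : goldenPhi ^ (A.max' hA + 1) ≤ goldenPhi ^ (B.max' hB) :=
      zpow_le_zpow_right₀ one_lt_gphi.le (by omega)
    have h3 : goldenPhi ^ (B.max' hB) ≤ valS B := by
      have := valS_erase (B.max'_mem hB)
      have := valS_nonneg (B.erase (B.max' hB))
      linarith
    linarith
  intro n
  induction n with
  | zero =>
    intro S T hcard hS hT hval
    have hSe : S = ∅ := Finset.card_eq_zero.mp (Nat.le_zero.mp hcard)
    subst hSe
    rcases T.eq_empty_or_nonempty with rfl | hne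
    · rfl
    · exfalso
      have h0 : valS (∅ : Finset ℤ) = 0 := by simp [valS]
      have := valS_pos hne
      linarith
  | succ n ih =>
    intro S T hcard hS hT hval
    rcases S.eq_empty_or_nonempty with rfl | hneS
    · rcases T.eq_empty_or_nonempty with rfl | hne
      · rfl
      · exfalso
        have h0 : valS (∅ : Finset ℤ) = 0 := by simp [valS]
        have := valS_pos hne
        linarith
    · have hneT : T.Nonempty := by
        by_contra h
        rw [Finset.not_nonempty_iff_eq_empty] at h
        subst h
        have h0 : valS (∅ : Finset ℤ) = 0 := by simp [valS]
        have := valS_pos hneS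
        linarith
      have hmax : S.max' hneS = T.max' hneT := by
        by_contra h
        rcases lt_or_gt_of_ne h with h' | h'
        · exact key S T hneS hneT hS hval h'
        · exact key T S hneT hneS hT hval.symm h'
      set a := S.max' hneS with ha
      have haS : a ∈ S := S.max'_mem hneS
      have haT : a ∈ T := by rw [hmax]; exact T.max'_mem hneT
      have hval' : valS (S.erase a) = valS (T.erase a) := by
        rw [valS_erase haS, valS_erase haT, hval]
      have hcard' : (S.erase a).card ≤ n := by
        have := Finset.card_erase_of_mem haS
        have : 1 ≤ S.card := Finset.card_pos.mpr hneS
        have := Finset.card_erase_of_mem haS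
        omega
      have := ih (S.erase a) (T.erase a) hcard'
        (SpS.subset (Finset.erase_subset _ _) hS)
        (SpS.subset (Finset.erase_subset _ _) hT) hval'
      have hSi : S = insert a (S.erase a) := (Finset.insert_erase haS).symm
      have hTi : T = insert a (T.erase a) := (Finset.insert_erase haT).symm
      rw [hSi, hTi, this]

/-- Upward addition: add φ^i to a sparse set when i is unoccupied. -/
lemma up : ∀ n (S : Finset ℤ) (i : ℤ),
    2 * (S.filter (fun j => i ≤ j)).card + (if i - 1 ∈ S then 1 else 0) < n →
    SpS S → i ∉ S →
    ∃ T, SpS T ∧ valS T = valS S + goldenPhi ^ i ∧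
      ∀ j, j < i - 1 → (j ∈ T ↔ j ∈ S) := by
  intro n
  induction n with
  | zero => intro S i h; omega
  | succ n ih =>
    intro S i hμ hS hi
    by_cases h1 : i + 1 ∈ S
    · -- carry up: φ^i + φ^(i+1) = φ^(i+2)
      have h2 : i + 2 ∉ S := by
        have := hS (i + 1) h1
        convert this using 2
        ring
      set S' := S.erase (i + 1) with hS'
      have hS'sp : SpS S' := SpS.subset (Finset.erase_subset _ _) hS
      have hni : i + 2 ∉ S' := fun h => h2 (Finset.mem_of_mem_erase h)
      -- measure decreases
      have hmeas : 2 * (S'.filter (fun j => i + 2 ≤ j)).card +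
          (if i + 2 - 1 ∈ S' then 1 else 0) < n := by
        have hsub : insert (i+1) (S.filter (fun j => i + 2 ≤ j)) ⊆
            S.filter (fun j => i ≤ j) := by
          intro x hx
          rcases Finset.mem_insert.mp hx with rfl | hx
          · exact Finset.mem_filter.mpr ⟨h1, by omega⟩
          · have := Finset.mem_filter.mp hx
            exact Finset.mem_filter.mpr ⟨this.1, by omega⟩
        have hnotin : (i+1) ∉ S.filter (fun j => i + 2 ≤ j) := by
          intro h
          have := (Finset.mem_filter.mp h).2
          omega
        have hc1 : (S.filter (fun j => i + 2 ≤ j)).card + 1 ≤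
            (S.filter (fun j => i ≤ j)).card := by
          have := Finset.card_le_card hsub
          rwa [Finset.card_insert_of_notMem hnotin] at this
        have hc2 : (S'.filter (fun j => i + 2 ≤ j)).card ≤
            (S.filter (fun j => i + 2 ≤ j)).card :=
          Finset.card_le_card (Finset.filter_subset_filter _ (Finset.erase_subset _ _))
        have he : i + 2 - 1 ∉ S' := by
          intro h
          have := Finset.ne_of_mem_erase h
          omega
        rw [if_neg he]
        split_ifs at hμ <;> omega
      obtain ⟨T, hT, hval, hloc⟩ := ih S' (i + 2) hmeas hS'sp hni
      refine ⟨T, hT, ?_, ?_⟩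
      · have hv' : valS S' = valS S - goldenPhi ^ (i + 1) := valS_erase h1
        have hrec := gphi_rec i
        rw [hval, hv']
        linarith
      · intro j hj
        rw [hloc j (by omega)]
        constructor
        · exact fun h => Finset.mem_of_mem_erase h
        · intro h
          exact Finset.mem_erase.mpr ⟨by omega, h⟩
    · by_cases h3 : i - 1 ∈ S
      · -- combine: φ^(i-1) + φ^i = φ^(i+1)
        set S' := S.erase (i - 1) with hS'
        have hS'sp : SpS S' := SpS.subset (Finset.erase_subset _ _) hS
        have hni : i + 1 ∉ S' := fun h => h1 (Finset.mem_of_mem_erase h)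
        have hmeas : 2 * (S'.filter (fun j => i + 1 ≤ j)).card +
            (if i + 1 - 1 ∈ S' then 1 else 0) < n := by
          have he : i + 1 - 1 ∉ S' := by
            intro h
            exact hi (by simpa using Finset.mem_of_mem_erase h)
          rw [if_neg he]
          have hc2 : (S'.filter (fun j => i + 1 ≤ j)).card ≤
              (S.filter (fun j => i ≤ j)).card := by
            apply Finset.card_le_card
            intro x hx
            have := Finset.mem_filter.mp hx
            exact Finset.mem_filter.mpr ⟨Finset.mem_of_mem_erase this.1, by omega⟩
          rw [if_pos h3] at hμ
          omega
        obtain ⟨T, hT, hval, hloc⟩ := ih S' (i + 1) hmeas hS'sp hni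
        refine ⟨T, hT, ?_, ?_⟩
        · have hv' : valS S' = valS S - goldenPhi ^ (i - 1) := valS_erase h3
          have hrec := gphi_rec (i - 1)
          have e1 : i - 1 + 2 = i + 1 := by ring
          have e2 : i - 1 + 1 = i := by ring
          rw [e1, e2] at hrec
          rw [hval, hv']
          linarith
        · intro j hj
          rw [hloc j (by omega)]
          constructor
          · exact fun h => Finset.mem_of_mem_erase h
          · intro h
            exact Finset.mem_erase.mpr ⟨by omega, h⟩
      · -- just place the digit
        refine ⟨insert i S, ?_, ?_, ?_⟩
        · intro j hj hj1
          rcases Finset.mem_insert.mp hj with rfl | hjS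
          · rcases Finset.mem_insert.mp hj1 with h | h
            · omega
            · exact h1 h
          · rcases Finset.mem_insert.mp hj1 with h | h
            · exact h3 (by rw [show i - 1 = j by omega]; exact hjS)
            · exact hS j hjS h
        · unfold valS
          rw [Finset.sum_insert hi]
          ring
        · intro j hj
          rw [Finset.mem_insert]
          constructor
          · rintro (rfl | h)
            · omega
            · exact h
          · exact fun h => Or.inr h

/-- Downward addition: add φ^i to a sparse set when positions i+1, i+2 are free. -/
lemma down : ∀ n (S : Finset ℤ) (i : ℤ),
    (S.filter (fun j => j ≤ i)).card < n →
    SpS S → i + 1 ∉ S → i + 2 ∉ S →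
    ∃ T, SpS T ∧ valS T = valS S + goldenPhi ^ i ∧
      ∀ j, i + 1 < j → (j ∈ T ↔ j ∈ S) := by
  intro n
  induction n with
  | zero => intro S i h; omega
  | succ n ih =>
    intro S i hμ hS h1 h2
    by_cases hi : i ∈ S
    · -- 2·φ^i = φ^(i+1) + φ^(i-2)
      have hm1 : i - 1 ∉ S := by
        intro h
        have := hS (i - 1) h
        simp only [sub_add_cancel] at this
        exact this hi
      set S' := insert (i + 1) (S.erase i) with hS'
      have hS'sp : SpS S' := by
        intro j hj hj1
        rcases Finset.mem_insert.mp hj with rfl | hjE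
        · rcases Finset.mem_insert.mp hj1 with h | h
          · omega
          · refine h2 ?_
            have := Finset.mem_of_mem_erase h
            rwa [show i + 1 + 1 = i + 2 by ring] at this
        · have hjS := Finset.mem_of_mem_erase hjE
          rcases Finset.mem_insert.mp hj1 with h | h
          · have : j = i := by omega
            exact (Finset.ne_of_mem_erase hjE) this
          · exact hS j hjS (Finset.mem_of_mem_erase h)
      have hn1 : i - 2 + 1 ∉ S' := by
        intro h
        rcases Finset.mem_insert.mp h with h | h
        · omega
        · exact hm1 (by
            have := Finset.mem_of_mem_erase h
            convert this using 1
            ring)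
      have hn2 : i - 2 + 2 ∉ S' := by
        intro h
        rcases Finset.mem_insert.mp h with h | h
        · omega
        · have := Finset.ne_of_mem_erase h
          omega
      have hmeas : (S'.filter (fun j => j ≤ i - 2)).card < n := by
        have hss : S'.filter (fun j => j ≤ i - 2) ⊂ S.filter (fun j => j ≤ i) := by
          constructor
          · intro x hx
            have hx' := Finset.mem_filter.mp hx
            rcases Finset.mem_insert.mp hx'.1 with rfl | h
            · omega
            · exact Finset.mem_filter.mpr ⟨Finset.mem_of_mem_erase h, by omega⟩
          · intro hcon
            have : i ∈ S'.filter (fun j => j ≤ i - 2) :=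
              hcon (Finset.mem_filter.mpr ⟨hi, le_refl i⟩)
            have := (Finset.mem_filter.mp this).2
            omega
        have := Finset.card_lt_card hss
        omega
      obtain ⟨T, hT, hval, hloc⟩ := ih S' (i - 2) hmeas hS'sp hn1 hn2
      refine ⟨T, hT, ?_, ?_⟩
      · have hni : i + 1 ∉ S.erase i := fun h => h1 (Finset.mem_of_mem_erase h)
        have hv' : valS S' = goldenPhi ^ (i + 1) + (valS S - goldenPhi ^ i) := by
          unfold valS
          rw [Finset.sum_insert hni]
          have := valS_erase hi
          unfold valS at this
          rw [this]
        have hr1 := gphi_rec (i - 1)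
        have e1 : i - 1 + 2 = i + 1 := by ring
        have e2 : i - 1 + 1 = i := by ring
        rw [e1, e2] at hr1
        have hr2 := gphi_rec (i - 2)
        have e3 : i - 2 + 2 = i := by ring
        have e4 : i - 2 + 1 = i - 1 := by ring
        rw [e3, e4] at hr2
        rw [hval, hv']
        linarith
      · intro j hj
        rw [hloc j (by omega)]
        constructor
        · intro h
          rcases Finset.mem_insert.mp h with rfl | h
          · omega
          · exact Finset.mem_of_mem_erase h
        · intro h
          exact Finset.mem_insert.mpr (Or.inr (Finset.mem_erase.mpr ⟨by omega, h⟩))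
    · by_cases hm1 : i - 1 ∈ S
      · -- φ^(i-1) + φ^i = φ^(i+1)
        refine ⟨insert (i + 1) (S.erase (i - 1)), ?_, ?_, ?_⟩
        · intro j hj hj1
          rcases Finset.mem_insert.mp hj with rfl | hjE
          · rcases Finset.mem_insert.mp hj1 with h | h
            · omega
            · refine h2 ?_
              have := Finset.mem_of_mem_erase h
              rwa [show i + 1 + 1 = i + 2 by ring] at this
          · have hjS := Finset.mem_of_mem_erase hjE
            rcases Finset.mem_insert.mp hj1 with h | h
            · have : j = i := by omega
              subst this
              exact hi hjS
            · exact hS j hjS (Finset.mem_of_mem_erase h)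
        · have hni : i + 1 ∉ S.erase (i - 1) := fun h => h1 (Finset.mem_of_mem_erase h)
          unfold valS
          rw [Finset.sum_insert hni]
          have := valS_erase hm1
          unfold valS at this
          rw [this]
          have hr1 := gphi_rec (i - 1)
          have e1 : i - 1 + 2 = i + 1 := by ring
          have e2 : i - 1 + 1 = i := by ring
          rw [e1, e2] at hr1
          linarith
        · intro j hj
          rw [Finset.mem_insert, Finset.mem_erase]
          constructor
          · rintro (rfl | ⟨_, h⟩)
            · omega
            · exact h
          · intro h
            exact Or.inr ⟨by omega, h⟩
      · -- just place the digit
        refine ⟨insert i S, ?_, ?_, ?_⟩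
        · intro j hj hj1
          rcases Finset.mem_insert.mp hj with rfl | hjS
          · rcases Finset.mem_insert.mp hj1 with h | h
            · omega
            · exact h1 h
          · rcases Finset.mem_insert.mp hj1 with h | h
            · have : j = i - 1 := by omega
              subst this
              exact hm1 hjS
            · exact hS j hjS h
        · unfold valS
          rw [Finset.sum_insert hi]
          ring
        · intro j hj
          rw [Finset.mem_insert]
          constructor
          · rintro (rfl | h)
            · omega
            · exact h
          · exact fun h => Or.inr h

/-- Adding 1 to the value of a sparse set. -/
lemma addOne (S : Finset ℤ) (hS : SpS S) :
    ∃ T, SpS T ∧ valS T = valS S + 1 := by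
  have h10 : goldenPhi ^ (0:ℤ) = 1 := zpow_zero _
  by_cases h0 : 0 ∈ S
  · have h1 : 1 ∉ S := by simpa using hS 0 h0
    have hm1 : -1 ∉ S := by
      intro h
      have := hS (-1) h
      simp at this
      exact this h0
    by_cases h2 : 2 ∈ S
    · have h3 : 3 ∉ S := by
        have := hS 2 h2
        simpa using this
      set S'' := (S.erase 0).erase 2 with hS''
      have hsub : S'' ⊆ S := fun x hx =>
        Finset.mem_of_mem_erase (Finset.mem_of_mem_erase hx)
      have hS''sp : SpS S'' := SpS.subset hsub hS
      have h3' : (3:ℤ) ∉ S'' := fun h => h3 (hsub h)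
      obtain ⟨T', hT', hv', hl'⟩ := up
        (2 * (S''.filter (fun j => 3 ≤ j)).card + (if (3:ℤ) - 1 ∈ S'' then 1 else 0) + 1)
        S'' 3 (by omega) hS''sp h3'
      have hT'm1 : (-2:ℤ) + 1 ∉ T' := by
        intro h
        rw [show (-2:ℤ) + 1 = -1 by ring] at h
        have := (hl' (-1) (by norm_num)).mp h
        exact hm1 (hsub this)
      have hT'0 : (-2:ℤ) + 2 ∉ T' := by
        intro h
        rw [show (-2:ℤ) + 2 = 0 by ring] at h
        have := (hl' 0 (by norm_num)).mp h
        have := Finset.mem_of_mem_erase this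
        exact (Finset.ne_of_mem_erase this) rfl
      obtain ⟨T, hT, hv, _⟩ := down ((T'.filter (fun j => j ≤ -2)).card + 1)
        T' (-2) (by omega) hT' hT'm1 hT'0
      refine ⟨T, hT, ?_⟩
      have h2e : 2 ∈ S.erase 0 := Finset.mem_erase.mpr ⟨by norm_num, h2⟩
      have hv'' : valS S'' = valS S - goldenPhi ^ (0:ℤ) - goldenPhi ^ (2:ℤ) := by
        rw [hS'', valS_erase h2e, valS_erase h0]
      -- φ^3 + φ^(-2) = 2 + φ^2
      have hr1 := gphi_rec 1      -- φ^3 = φ^2 + φ^1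
      have hr2 := gphi_rec (-1)   -- φ^1 = φ^0 + φ^(-1)
      have hr3 := gphi_rec (-2)   -- φ^0 = φ^(-1) + φ^(-2)
      rw [show (1:ℤ) + 2 = 3 by ring, show (1:ℤ) + 1 = 2 by ring] at hr1
      rw [show (-1:ℤ) + 2 = 1 by ring, show (-1:ℤ) + 1 = 0 by ring] at hr2
      rw [show (-2:ℤ) + 2 = 0 by ring, show (-2:ℤ) + 1 = -1 by ring] at hr3
      have h10' : goldenPhi ^ (0:ℤ) = 1 := zpow_zero _
      rw [hv, hv', hv'']
      linear_combination hr1 + hr2 - hr3 + h10'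
    · obtain ⟨T, hT, hv, _⟩ := down ((S.filter (fun j => j ≤ 0)).card + 1)
        S 0 (by omega) hS (by simpa using h1) (by simpa using h2)
      exact ⟨T, hT, by rw [hv, h10]⟩
  · obtain ⟨T, hT, hv, _⟩ := up
      (2 * (S.filter (fun j => 0 ≤ j)).card + (if (0:ℤ) - 1 ∈ S then 1 else 0) + 1)
      S 0 (by omega) hS h0
    exact ⟨T, hT, by rw [hv, h10]⟩

/-- Existence of a sparse representation of every positive integer. -/
lemma exists_sparse : ∀ N : ℕ, 0 < N → ∃ S : Finset ℤ, SpS S ∧ valS S = N := by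
  intro N
  induction N with
  | zero => omega
  | succ n ih =>
    intro _
    rcases Nat.eq_zero_or_pos n with rfl | hn
    · refine ⟨{0}, ?_, ?_⟩
      · intro i hi
        simp at hi
        subst hi
        simp
      · simp [valS]
    · obtain ⟨S, hS, hval⟩ := ih hn
      obtain ⟨T, hT, hv⟩ := addOne S hS
      refine ⟨T, hT, ?_⟩
      rw [hv, hval]
      push_cast
      ring

/-- Build a 0/1 finsupp from a finset of exponents. -/
def ofS (S : Finset ℤ) : ℤ →₀ ℕ :=
  ⟨S, fun i => if i ∈ S then 1 else 0, by
    intro a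
    by_cases h : a ∈ S <;> simp [h]⟩

lemma ofS_apply (S : Finset ℤ) (i : ℤ) : ofS S i = if i ∈ S then 1 else 0 := rfl

lemma ofS_support (S : Finset ℤ) : (ofS S).support = S := rfl

lemma ofS_rep {S : Finset ℤ} {N : ℕ} (hval : valS S = N) : IsPhiRep N (ofS S) := by
  constructor
  · intro i
    rw [ofS_apply]
    split_ifs <;> omega
  · rw [Finsupp.sum, ofS_support]
    rw [← hval]
    unfold valS
    apply Finset.sum_congr rfl
    intro i hi
    rw [ofS_apply, if_pos hi]
    norm_num

lemma ofS_bergman {S : Finset ℤ} {N : ℕ} (hS : SpS S) (hval : valS S = N) :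
    IsBergman N (ofS S) := by
  refine ⟨ofS_rep hval, ?_⟩
  intro i
  rw [ofS_apply, ofS_apply]
  by_cases h : i ∈ S
  · rw [if_neg (hS i h), zero_mul]
  · rw [if_neg h, mul_zero]

/-- The φ-value of a rep equals the value of its support. -/
lemma rep_sum_eq (c : ℤ →₀ ℕ) (hle : ∀ i, c i ≤ 1) :
    (c.sum fun i a => (a : ℝ) * goldenPhi ^ i) = valS c.support := by
  rw [Finsupp.sum]
  unfold valS
  apply Finset.sum_congr rfl
  intro i hi
  have h1 : c i ≠ 0 := Finsupp.mem_support_iff.mp hi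
  have h2 : c i = 1 := by have := hle i; omega
  rw [h2]
  norm_num

lemma rep_ext (c d : ℤ →₀ ℕ) (hc : ∀ i, c i ≤ 1) (hd : ∀ i, d i ≤ 1)
    (h : c.support = d.support) : c = d := by
  ext i
  by_cases hi : i ∈ c.support
  · have h1 : c i ≠ 0 := Finsupp.mem_support_iff.mp hi
    have h2 : d i ≠ 0 := Finsupp.mem_support_iff.mp (h ▸ hi)
    have := hc i; have := hd i
    omega
  · have h1 : c i = 0 := Finsupp.notMem_support_iff.mp hi
    have h2 : d i = 0 := Finsupp.notMem_support_iff.mp (fun hh => hi (h ▸ hh))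
    rw [h1, h2]

lemma bergman_support_sparse {N : ℕ} {c : ℤ →₀ ℕ} (h : IsBergman N c) :
    SpS c.support := by
  intro i hi hi1
  have h1 : c i ≠ 0 := Finsupp.mem_support_iff.mp hi
  have h2 : c (i + 1) ≠ 0 := Finsupp.mem_support_iff.mp hi1
  have := h.2 i
  exact h1 (by
    rcases Nat.mul_eq_zero.mp this with h' | h'
    · exact absurd h' h2
    · exact h')

/-- Uniqueness of Bergman representations. -/
lemma bergman_unique {N : ℕ} {c d : ℤ →₀ ℕ} (hc : IsBergman N c) (hd : IsBergman N d) :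
    c = d := by
  have hvc : valS c.support = N := by
    rw [← rep_sum_eq c hc.1.1]; exact hc.1.2
  have hvd : valS d.support = N := by
    rw [← rep_sum_eq d hd.1.1]; exact hd.1.2
  have := valS_inj c.support.card c.support d.support le_rfl
    (bergman_support_sparse hc) (bergman_support_sparse hd) (by rw [hvc, hvd])
  exact rep_ext c d hc.1.1 hd.1.1 this

/-- An admissible representation without the 1,1 pattern at (1,0) is Bergman. -/
lemma admissible_bergman {N : ℕ} {c : ℤ →₀ ℕ} (hc : IsAdmissible N c)
    (h : ¬(c 1 = 1 ∧ c 0 = 1)) : IsBergman N c := by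
  refine ⟨hc.1, fun i => ?_⟩
  by_cases hi : i = 0
  · subst hi
    have h1 := hc.1.1 1
    have h0 := hc.1.1 0
    have : c 1 = 0 ∨ c 0 = 0 := by
      by_contra hcon
      push_neg at hcon
      exact h ⟨by omega, by omega⟩
    norm_num
    rcases this with h' | h'
    · left; exact h'
    · right; exact h'
  · exact hc.2 i hi

/-- Uniqueness of admissible representations with the 1,1 pattern at (1,0). -/
lemma adm11_unique {N : ℕ} {c d : ℤ →₀ ℕ}
    (hc : IsAdmissible N c) (hc1 : c 1 = 1) (hc0 : c 0 = 1)
    (hd : IsAdmissible N d) (hd1 : d 1 = 1) (hd0 : d 0 = 1) : c = d := by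
  have key : ∀ (e : ℤ →₀ ℕ), IsAdmissible N e → e 1 = 1 → e 0 = 1 →
      SpS ((e.support.erase 1).erase 0) ∧
      valS ((e.support.erase 1).erase 0) = (N : ℝ) - goldenPhi ^ (1:ℤ) - 1 ∧
      e.support = insert 1 (insert 0 ((e.support.erase 1).erase 0)) := by
    intro e he he1 he0
    have h1s : (1:ℤ) ∈ e.support := Finsupp.mem_support_iff.mpr (by omega)
    have h0s : (0:ℤ) ∈ e.support := Finsupp.mem_support_iff.mpr (by omega)
    have h0s' : (0:ℤ) ∈ e.support.erase 1 := Finset.mem_erase.mpr ⟨by norm_num, h0s⟩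
    refine ⟨?_, ?_, ?_⟩
    · intro i hi hi1
      have hiS : i ∈ e.support := Finset.mem_of_mem_erase (Finset.mem_of_mem_erase hi)
      have hi1S : i + 1 ∈ e.support := Finset.mem_of_mem_erase (Finset.mem_of_mem_erase hi1)
      have hine : i ≠ 0 := by
        have := Finset.ne_of_mem_erase hi
        exact this
      have := he.2 i hine
      have hci : e i ≠ 0 := Finsupp.mem_support_iff.mp hiS
      have hci1 : e (i + 1) ≠ 0 := Finsupp.mem_support_iff.mp hi1S
      rcases Nat.mul_eq_zero.mp this with h' | h'
      · exact hci1 h'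
      · exact hci h'
    · have hv : valS e.support = N := by
        rw [← rep_sum_eq e he.1.1]; exact he.1.2
      rw [valS_erase h0s', valS_erase h1s, hv]
      norm_num
    · rw [Finset.insert_erase h0s', Finset.insert_erase h1s]
  obtain ⟨hcs, hcv, hci⟩ := key c hc hc1 hc0
  obtain ⟨hds, hdv, hdi⟩ := key d hd hd1 hd0
  have heq := valS_inj _ _ _ le_rfl hcs hds (by rw [hcv, hdv])
  have : c.support = d.support := by rw [hci, hdi, heq]
  exact rep_ext c d hc.1.1 hd.1.1 this

end PhiRepAux

theorem stmt1 (N : ℕ) (hN : 0 < N) :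
    ∃! c : ℤ →₀ ℕ, IsAdmissible N c ∧
      ((c 1 = 1 ∧ c 0 = 1) ∨
        ¬ ∃ c' : ℤ →₀ ℕ, IsAdmissible N c' ∧ c' 1 = 1 ∧ c' 0 = 1) := by
  by_cases h : ∃ c', IsAdmissible N c' ∧ c' 1 = 1 ∧ c' 0 = 1
  · obtain ⟨c₀, hc₀, h1, h0⟩ := h
    refine ⟨c₀, ⟨hc₀, Or.inl ⟨h1, h0⟩⟩, ?_⟩
    rintro c ⟨hadm, hor⟩
    rcases hor with ⟨hc1, hc0⟩ | hno
    · exact PhiRepAux.adm11_unique hadm hc1 hc0 hc₀ h1 h0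
    · exact absurd ⟨c₀, hc₀, h1, h0⟩ hno
  · obtain ⟨S, hS, hval⟩ := PhiRepAux.exists_sparse N hN
    have hberg := PhiRepAux.ofS_bergman hS hval
    refine ⟨PhiRepAux.ofS S, ⟨⟨hberg.1, fun i _ => hberg.2 i⟩, Or.inr h⟩, ?_⟩
    rintro c ⟨hadm, hor⟩
    have hnot : ¬(c 1 = 1 ∧ c 0 = 1) := by
      rintro ⟨hc1, hc0⟩
      exact h ⟨c, hadm, hc1, hc0⟩
    exact PhiRepAux.bergman_unique (PhiRepAux.admissible_bergman hadm hnot) hberg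
end
end

section
/- For every n ≥ 1: the Bergman representation of the Lucas number L_{2n} has digit 1 exactly at positions 2n and -2n (so L_{2n} = φ^{2n} + φ^{-2n}), and the canonical representation of L_{2n} has digit 1 exactly at position -2n, at positions 0 and 1, and at the odd positions 3, 5, ..., 2n-1. -/
noncomputable section

attribute [local instance] Classical.propDecidable

lemma phi_pos : 0 < goldenPhi := by
  have : 0 < Real.sqrt 5 := Real.sqrt_pos.mpr (by norm_num)
  unfold goldenPhi; linarith
lemma one_lt_phi : 1 < goldenPhi := by
  have : 1 < Real.sqrt 5 := by
    have := Real.lt_sqrt (x := 1) (y := 5) (by norm_num)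
    rw [this]; norm_num
  unfold goldenPhi; linarith
lemma phi_sq : goldenPhi ^ 2 = goldenPhi + 1 := by
  have h5 : Real.sqrt 5 ^ 2 = 5 := Real.sq_sqrt (by norm_num)
  unfold goldenPhi; nlinarith
lemma phi_ne : goldenPhi ≠ 0 := ne_of_gt phi_pos
lemma phi_zpow_add (i : ℤ) : goldenPhi ^ (i+2) = goldenPhi ^ (i+1) + goldenPhi ^ i := by
  have h1 : goldenPhi ^ (i+2) = goldenPhi ^ i * goldenPhi ^ (2:ℤ) := by
    rw [← zpow_add₀ phi_ne]
  have h2 : goldenPhi ^ (i+1) = goldenPhi ^ i * goldenPhi := by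
    rw [zpow_add₀ phi_ne, zpow_one]
  rw [h1, h2, show ((2:ℤ)) = ((2:ℕ):ℤ) by norm_num, zpow_natCast, phi_sq]
  ring
lemma phi_zpow_lt {a b : ℤ} (h : a < b) : goldenPhi ^ a < goldenPhi ^ b :=
  zpow_lt_zpow_right₀ one_lt_phi h
lemma phi_zpow_le {a b : ℤ} (h : a ≤ b) : goldenPhi ^ a ≤ goldenPhi ^ b :=
  zpow_le_zpow_right₀ (le_of_lt one_lt_phi) h

def NoConsec (S : Finset ℤ) : Prop := ∀ i ∈ S, i + 1 ∉ S

lemma noConsec_subset {S T : Finset ℤ} (h : S ⊆ T) (hT : NoConsec T) : NoConsec S :=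
  fun i hi hi1 => hT i (h hi) (h hi1)

lemma sum_lt (S : Finset ℤ) : ∀ M : ℤ, (∀ i ∈ S, i ≤ M) → NoConsec S →
    ∑ i ∈ S, goldenPhi ^ i < goldenPhi ^ (M + 1) := by
  induction S using Finset.strongInduction with
  | _ S ih =>
    intro M hM hcons
    rcases S.eq_empty_or_nonempty with rfl | hne
    · simpa using zpow_pos phi_pos (M+1)
    · set m := S.max' hne with hm
      have hmS : m ∈ S := S.max'_mem hne
      have hmM : m ≤ M := hM m hmS
      have hsub : S.erase m ⊂ S := Finset.erase_ssubset hmS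
      have hle : ∀ i ∈ S.erase m, i ≤ m - 2 := by
        intro i hi
        have hiS := Finset.mem_of_mem_erase hi
        have hne' := Finset.ne_of_mem_erase hi
        have h1 : i ≤ m := S.le_max' i hiS
        have h2 : i ≠ m - 1 := by
          intro h
          exact hcons i hiS (by rw [h]; simpa using hmS)
        omega
      have hrec := ih _ hsub (m - 2) hle (noConsec_subset (Finset.erase_subset _ _) hcons)
      have hsplit : ∑ i ∈ S, goldenPhi ^ i = goldenPhi ^ m + ∑ i ∈ S.erase m, goldenPhi ^ i :=
        (Finset.add_sum_erase _ _ hmS).symm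
      have heq1 : (m - 2) + 1 = m - 1 := by ring
      have heq : goldenPhi ^ m + goldenPhi ^ (m - 1) = goldenPhi ^ (m + 1) := by
        have := phi_zpow_add (m - 1)
        have e1 : m - 1 + 2 = m + 1 := by ring
        have e2 : m - 1 + 1 = m := by ring
        rw [e1, e2] at this
        linarith
      have hlast : goldenPhi ^ (m + 1) ≤ goldenPhi ^ (M + 1) := phi_zpow_le (by omega)
      rw [heq1] at hrec
      rw [hsplit]; linarith

lemma sum_lower {S : Finset ℤ} {m : ℤ} (hm : m ∈ S) :
    goldenPhi ^ m ≤ ∑ i ∈ S, goldenPhi ^ i :=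
  Finset.single_le_sum (fun i _ => le_of_lt (zpow_pos phi_pos i)) hm

lemma finset_unique (S : Finset ℤ) : ∀ T : Finset ℤ, NoConsec S → NoConsec T →
    ∑ i ∈ S, goldenPhi ^ i = ∑ i ∈ T, goldenPhi ^ i → S = T := by
  induction S using Finset.strongInduction with
  | _ S ih =>
    intro T hS hT hsum
    rcases S.eq_empty_or_nonempty with rfl | hne
    · rcases T.eq_empty_or_nonempty with rfl | hTne
      · rfl
      · exfalso
        have h1 := sum_lower (T.max'_mem hTne)
        have h2 := zpow_pos phi_pos (T.max' hTne)
        simp only [Finset.sum_empty] at hsum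
        linarith
    · rcases T.eq_empty_or_nonempty with rfl | hTne
      · exfalso
        have h1 := sum_lower (S.max'_mem hne)
        have h2 := zpow_pos phi_pos (S.max' hne)
        simp only [Finset.sum_empty] at hsum
        linarith
      · set a := S.max' hne with ha
        set b := T.max' hTne with hb
        have haS : a ∈ S := S.max'_mem hne
        have hbT : b ∈ T := T.max'_mem hTne
        have hub : ∀ U : Finset ℤ, ∀ h : U.Nonempty, NoConsec U →
            ∑ i ∈ U, goldenPhi ^ i < goldenPhi ^ (U.max' h + 1) := by
          intro U h hU
          exact sum_lt U _ (fun i hi => U.le_max' i hi) hU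
        have hab : a = b := by
          by_contra hne'
          rcases lt_or_gt_of_ne hne' with h | h
          · have h1 := hub S hne hS
            have h2 : goldenPhi ^ (a + 1) ≤ goldenPhi ^ b := phi_zpow_le (by omega)
            have h3 := sum_lower hbT
            rw [hsum] at h1
            linarith
          · have h1 := hub T hTne hT
            have h2 : goldenPhi ^ (b + 1) ≤ goldenPhi ^ a := phi_zpow_le (by omega)
            have h3 := sum_lower haS
            rw [← hsum] at h1
            linarith
        have hsum' : ∑ i ∈ S.erase a, goldenPhi ^ i = ∑ i ∈ T.erase a, goldenPhi ^ i := by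
          have e1 := Finset.add_sum_erase _ (fun i => goldenPhi ^ i) haS
          have e2 := Finset.add_sum_erase _ (fun i => goldenPhi ^ i) (hab ▸ hbT)
          rw [← e1, ← e2] at hsum
          linarith
        have := ih _ (Finset.erase_ssubset haS) (T.erase a)
          (noConsec_subset (Finset.erase_subset _ _) hS)
          (noConsec_subset (Finset.erase_subset _ _) hT) hsum'
        have : insert a (S.erase a) = insert a (T.erase a) := by rw [this]
        rwa [Finset.insert_erase haS, Finset.insert_erase (hab ▸ hbT)] at this
-- value of a finsupp
def pval (c : ℤ →₀ ℕ) : ℝ := c.sum fun i a => (a : ℝ) * goldenPhi ^ i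

lemma pval_eq {c : ℤ →₀ ℕ} (hc : ∀ i, c i ≤ 1) :
    pval c = ∑ i ∈ c.support, goldenPhi ^ i := by
  unfold pval Finsupp.sum
  refine Finset.sum_congr rfl fun i hi => ?_
  have h1 : c i ≠ 0 := Finsupp.mem_support_iff.mp hi
  have h2 := hc i
  have : c i = 1 := by omega
  rw [this]; simp

lemma noConsec_support {c : ℤ →₀ ℕ} (hc : ∀ i : ℤ, c (i + 1) * c i = 0) :
    NoConsec c.support := by
  intro i hi hi1
  have h1 : c i ≠ 0 := Finsupp.mem_support_iff.mp hi
  have h2 : c (i + 1) ≠ 0 := Finsupp.mem_support_iff.mp hi1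
  have := hc i
  rcases Nat.mul_eq_zero.mp this with h | h <;> contradiction

lemma eq_of_support_eq {c d : ℤ →₀ ℕ} (hc : ∀ i, c i ≤ 1) (hd : ∀ i, d i ≤ 1)
    (h : c.support = d.support) : c = d := by
  ext i
  by_cases hi : i ∈ c.support
  · have h1 : c i ≠ 0 := Finsupp.mem_support_iff.mp hi
    have h2 : d i ≠ 0 := Finsupp.mem_support_iff.mp (h ▸ hi)
    have := hc i; have := hd i; omega
  · have h1 : c i = 0 := Finsupp.notMem_support_iff.mp hi
    have h2 : d i = 0 := Finsupp.notMem_support_iff.mp (fun hh => hi (h ▸ hh))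
    omega

lemma bergman_unique {N : ℕ} {c d : ℤ →₀ ℕ} (hc : IsBergman N c) (hd : IsBergman N d) :
    c = d := by
  obtain ⟨⟨hc1, hc2⟩, hc3⟩ := hc
  obtain ⟨⟨hd1, hd2⟩, hd3⟩ := hd
  have hval : pval c = pval d := by unfold pval; rw [hc2, hd2]
  rw [pval_eq hc1, pval_eq hd1] at hval
  exact eq_of_support_eq hc1 hd1
    (finset_unique _ _ (noConsec_support hc3) (noConsec_support hd3) hval)

lemma admissible_unique {N : ℕ} {c d : ℤ →₀ ℕ} (hc : IsAdmissible N c)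
    (hc1 : c 1 = 1) (hc0 : c 0 = 1)
    (hd : IsAdmissible N d) (hd1 : d 1 = 1) (hd0 : d 0 = 1) : c = d := by
  obtain ⟨⟨hcle, hcv⟩, hccons⟩ := hc
  obtain ⟨⟨hdle, hdv⟩, hdcons⟩ := hd
  -- auxiliary facts, stated for an arbitrary such rep
  have key : ∀ e : ℤ →₀ ℕ, (∀ i, e i ≤ 1) → (∀ i : ℤ, i ≠ 0 → e (i + 1) * e i = 0) →
      e 1 = 1 → e 0 = 1 →
      NoConsec ((e.support.erase 0).erase 1) ∧
      ∑ i ∈ e.support, goldenPhi ^ i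
        = 1 + goldenPhi + ∑ i ∈ (e.support.erase 0).erase 1, goldenPhi ^ i ∧
      e.support = insert 0 (insert 1 ((e.support.erase 0).erase 1)) := by
    intro e hle hcons h1 h0
    have h0m : (0 : ℤ) ∈ e.support := Finsupp.mem_support_iff.mpr (by omega)
    have h1m : (1 : ℤ) ∈ e.support := Finsupp.mem_support_iff.mpr (by omega)
    have h1m' : (1 : ℤ) ∈ e.support.erase 0 := Finset.mem_erase.mpr ⟨by norm_num, h1m⟩
    constructor
    · intro i hi hi1
      have hiS := Finset.mem_of_mem_erase (Finset.mem_of_mem_erase hi)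
      have hi1S := Finset.mem_of_mem_erase (Finset.mem_of_mem_erase hi1)
      have hne0 : i ≠ 0 := by
        have := Finset.mem_erase.mp (Finset.mem_of_mem_erase hi)
        exact this.1 |> fun h => by
          have := Finset.mem_erase.mp hi
          omega
      have := hcons i hne0
      have ha : e i ≠ 0 := Finsupp.mem_support_iff.mp hiS
      have hb : e (i + 1) ≠ 0 := Finsupp.mem_support_iff.mp hi1S
      rcases Nat.mul_eq_zero.mp this with h | h <;> contradiction
    constructor
    · have e1 := (Finset.add_sum_erase _ (fun i => goldenPhi ^ i) h0m).symm
      have e2 := (Finset.add_sum_erase _ (fun i => goldenPhi ^ i) h1m').symm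
      rw [e1, e2]
      simp [zpow_one]
      ring
    · rw [Finset.insert_erase h1m', Finset.insert_erase h0m]
  obtain ⟨hcN, hcS, hcE⟩ := key c hcle hccons hc1 hc0
  obtain ⟨hdN, hdS, hdE⟩ := key d hdle hdcons hd1 hd0
  have hval : pval c = pval d := by unfold pval; rw [hcv, hdv]
  rw [pval_eq hcle, pval_eq hdle, hcS, hdS] at hval
  have heq : (c.support.erase 0).erase 1 = (d.support.erase 0).erase 1 :=
    finset_unique _ _ hcN hdN (by linarith)
  exact eq_of_support_eq hcle hdle (by rw [hcE, hdE, heq])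


-- Lucas closed form
def psiR : ℝ := (1 - Real.sqrt 5) / 2

lemma psi_sq : psiR ^ 2 = psiR + 1 := by
  have h5 : Real.sqrt 5 ^ 2 = 5 := Real.sq_sqrt (by norm_num)
  unfold psiR; nlinarith

lemma lucas_closed : ∀ k : ℕ, (lucas k : ℝ) = goldenPhi ^ k + psiR ^ k := by
  intro k
  induction k using Nat.twoStepInduction with
  | zero => norm_num [lucas]
  | one =>
    have : goldenPhi + psiR = 1 := by unfold goldenPhi psiR; ring
    simp [lucas, this]
  | more k ih1 ih2 =>
    have hphi : goldenPhi ^ (k + 2) = goldenPhi ^ (k + 1) + goldenPhi ^ k := by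
      calc goldenPhi ^ (k + 2) = goldenPhi ^ k * goldenPhi ^ 2 := by ring
        _ = goldenPhi ^ k * (goldenPhi + 1) := by rw [phi_sq]
        _ = goldenPhi ^ (k + 1) + goldenPhi ^ k := by ring
    have hpsi : psiR ^ (k + 2) = psiR ^ (k + 1) + psiR ^ k := by
      calc psiR ^ (k + 2) = psiR ^ k * psiR ^ 2 := by ring
        _ = psiR ^ k * (psiR + 1) := by rw [psi_sq]
        _ = psiR ^ (k + 1) + psiR ^ k := by ring
    have : lucas (k + 2) = lucas (k + 1) + lucas k := rfl
    rw [this]; push_cast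
    rw [ih1, ih2, hphi, hpsi]; ring

lemma psi_eq : psiR = -goldenPhi⁻¹ := by
  have h5 : Real.sqrt 5 ^ 2 = 5 := Real.sq_sqrt (by norm_num)
  have hmul : goldenPhi * psiR = -1 := by unfold goldenPhi psiR; nlinarith
  have h2 : psiR * goldenPhi = -goldenPhi⁻¹ * goldenPhi := by
    rw [neg_mul, inv_mul_cancel₀ phi_ne]; linarith
  exact mul_right_cancel₀ phi_ne h2

lemma lucas_even_val (n : ℕ) :
    (lucas (2 * n) : ℝ) = goldenPhi ^ ((2 * n : ℕ) : ℤ) + goldenPhi ^ (-((2 * n : ℕ) : ℤ)) := by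
  rw [lucas_closed (2 * n), psi_eq]
  have h1 : (-goldenPhi⁻¹) ^ (2 * n) = (goldenPhi⁻¹) ^ (2 * n) :=
    Even.neg_pow (even_two_mul n) _
  rw [h1, zpow_natCast, zpow_neg, zpow_natCast, inv_pow]

-- indicator finsupp
def ind (S : Finset ℤ) : ℤ →₀ ℕ :=
  ⟨S, fun i => if i ∈ S then 1 else 0, by intro a; by_cases h : a ∈ S <;> simp [h]⟩

lemma ind_apply (S : Finset ℤ) (i : ℤ) : ind S i = if i ∈ S then 1 else 0 := rfl

lemma ind_support (S : Finset ℤ) : (ind S).support = S := rfl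

lemma ind_le (S : Finset ℤ) : ∀ i, ind S i ≤ 1 := by
  intro i; rw [ind_apply]; split <;> omega

lemma ind_pval (S : Finset ℤ) : pval (ind S) = ∑ i ∈ S, goldenPhi ^ i := by
  rw [pval_eq (ind_le S), ind_support]

lemma ind_eq_one_iff (S : Finset ℤ) (i : ℤ) : ind S i = 1 ↔ i ∈ S := by
  rw [ind_apply]; split <;> simp_all

-- the Bergman set
def bset (n : ℕ) : Finset ℤ := {(2 * n : ℤ), -(2 * n : ℤ)}

lemma mem_bset {n : ℕ} (hn : 1 ≤ n) (i : ℤ) :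
    i ∈ bset n ↔ i = (2 * n : ℤ) ∨ i = -(2 * n : ℤ) := by
  simp [bset]

lemma bset_noconsec {n : ℕ} (hn : 1 ≤ n) : NoConsec (bset n) := by
  intro i hi hi1
  rw [mem_bset hn] at hi hi1
  omega

lemma bset_sum {n : ℕ} (hn : 1 ≤ n) :
    ∑ i ∈ bset n, goldenPhi ^ i = goldenPhi ^ ((2 * n : ℕ) : ℤ) + goldenPhi ^ (-((2 * n : ℕ) : ℤ)) := by
  have hne : (2 * n : ℤ) ≠ -(2 * n : ℤ) := by omega
  rw [bset, Finset.sum_pair hne]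
  push_cast
  ring_nf

-- the canonical set
def cset (n : ℕ) : Finset ℤ :=
  insert (-(2 * (n : ℤ))) (insert 0 (insert 1
    ((Finset.range (n - 1)).image (fun k : ℕ => 2 * (k : ℤ) + 3))))

lemma mem_img {n : ℕ} (j : ℤ) :
    (j ∈ (Finset.range (n - 1)).image (fun k : ℕ => 2 * (k : ℤ) + 3)) ↔
      ∃ k : ℕ, k < n - 1 ∧ j = 2 * (k : ℤ) + 3 := by
  rw [Finset.mem_image]
  constructor
  · rintro ⟨k, hk, rfl⟩; exact ⟨k, Finset.mem_range.mp hk, rfl⟩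
  · rintro ⟨k, hk, rfl⟩; exact ⟨k, Finset.mem_range.mpr hk, rfl⟩

lemma mem_cset {n : ℕ} (hn : 1 ≤ n) (i : ℤ) :
    i ∈ cset n ↔ i = -(2 * n : ℤ) ∨ i = 0 ∨ i = 1 ∨
      (Odd i ∧ 3 ≤ i ∧ i ≤ 2 * (n : ℤ) - 1) := by
  rw [cset, Finset.mem_insert, Finset.mem_insert, Finset.mem_insert, mem_img]
  constructor
  · rintro (h | h | h | ⟨k, hk, rfl⟩)
    · exact Or.inl h
    · exact Or.inr (Or.inl h)
    · exact Or.inr (Or.inr (Or.inl h))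
    · exact Or.inr (Or.inr (Or.inr ⟨⟨(k : ℤ) + 1, by ring⟩, by omega, by omega⟩))
  · rintro (h | h | h | ⟨⟨m, hm⟩, h3, hub⟩)
    · exact Or.inl h
    · exact Or.inr (Or.inl h)
    · exact Or.inr (Or.inr (Or.inl h))
    · exact Or.inr (Or.inr (Or.inr ⟨(m - 1).toNat, by omega, by omega⟩))

lemma cset_pairs {n : ℕ} (hn : 1 ≤ n) {i : ℤ} (hi : i ∈ cset n) (hi1 : i + 1 ∈ cset n) :
    i = 0 := by
  rw [mem_cset hn] at hi hi1
  rw [Int.odd_iff] at hi hi1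
  omega

lemma telescope : ∀ m : ℕ, 1 + goldenPhi + ∑ k ∈ Finset.range m, goldenPhi ^ (2 * (k : ℤ) + 3)
    = goldenPhi ^ (2 * (m : ℤ) + 2) := by
  intro m
  induction m with
  | zero =>
    have h := phi_zpow_add 0
    simp only [zero_add, zpow_one, zpow_zero] at h
    simp only [Finset.range_zero, Finset.sum_empty, add_zero, Nat.cast_zero, mul_zero, zero_add]
    linarith
  | succ m ih =>
    rw [Finset.sum_range_succ, ← add_assoc, ih]
    have := phi_zpow_add (2 * (m : ℤ) + 2)
    push_cast
    have e1 : (2 * (m : ℤ) + 2) + 2 = 2 * ((m : ℤ) + 1) + 2 := by ring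
    have e2 : (2 * (m : ℤ) + 2) + 1 = 2 * (m : ℤ) + 3 := by ring
    rw [e1, e2] at this
    linarith

lemma cset_sum {n : ℕ} (hn : 1 ≤ n) :
    ∑ i ∈ cset n, goldenPhi ^ i
      = goldenPhi ^ ((2 * n : ℕ) : ℤ) + goldenPhi ^ (-((2 * n : ℕ) : ℤ)) := by
  have hinj : ∀ a ∈ Finset.range (n - 1), ∀ b ∈ Finset.range (n - 1),
      (2 * (a : ℤ) + 3 = 2 * (b : ℤ) + 3) → a = b := by
    intro a _ b _ h; omega
  have h1 : (1 : ℤ) ∉ (Finset.range (n - 1)).image (fun k : ℕ => 2 * (k : ℤ) + 3) := by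
    rw [mem_img]; rintro ⟨k, hk, h⟩; omega
  have h0 : (0 : ℤ) ∉ insert 1 ((Finset.range (n - 1)).image (fun k : ℕ => 2 * (k : ℤ) + 3)) := by
    rw [Finset.mem_insert, mem_img]
    rintro (h | ⟨k, hk, h⟩) <;> omega
  have hm : -(2 * (n : ℤ)) ∉ insert 0 (insert 1
      ((Finset.range (n - 1)).image (fun k : ℕ => 2 * (k : ℤ) + 3))) := by
    rw [Finset.mem_insert, Finset.mem_insert, mem_img]
    rintro (h | h | ⟨k, hk, h⟩) <;> omega
  rw [cset, Finset.sum_insert hm, Finset.sum_insert h0, Finset.sum_insert h1,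
    Finset.sum_image hinj]
  have ht := telescope (n - 1)
  have e1 : 2 * ((n - 1 : ℕ) : ℤ) + 2 = ((2 * n : ℕ) : ℤ) := by omega
  rw [e1] at ht
  have e2 : -(2 * (n : ℤ)) = -((2 * n : ℕ) : ℤ) := by push_cast; ring
  rw [e2, zpow_zero, zpow_one]
  linarith

theorem stmt3 (n : ℕ) (hn : 1 ≤ n) :
    (∀ i : ℤ, bergmanRep (lucas (2 * n)) i = 1 ↔ (i = (2 * n : ℤ) ∨ i = -(2 * n : ℤ))) ∧
    (lucas (2 * n) : ℝ) = goldenPhi ^ (2 * n : ℤ) + goldenPhi ^ (-(2 * n : ℤ)) ∧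
    (∀ i : ℤ, canonicalRep (lucas (2 * n)) i = 1 ↔
      (i = -(2 * n : ℤ) ∨ i = 0 ∨ i = 1 ∨ (Odd i ∧ 3 ≤ i ∧ i ≤ 2 * (n : ℤ) - 1))) := by
  have hN := lucas_even_val n
  have hcast : ((2 * n : ℕ) : ℤ) = (2 * n : ℤ) := by push_cast; ring
  rw [hcast] at hN
  set N := lucas (2 * n) with hNdef
  -- Bergman part
  have hbcons : ∀ i : ℤ, ind (bset n) (i + 1) * ind (bset n) i = 0 := by
    intro i
    by_cases h1 : i ∈ bset n
    · by_cases h2 : i + 1 ∈ bset n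
      · exact absurd h2 (bset_noconsec hn i h1)
      · simp [ind_apply, h2]
    · simp [ind_apply, h1]
  have hbval : pval (ind (bset n)) = (N : ℝ) := by
    rw [ind_pval, bset_sum hn, hcast, hN]
  have hB : IsBergman N (ind (bset n)) := ⟨⟨ind_le _, hbval⟩, hbcons⟩
  have hex : ∃ c, IsBergman N c := ⟨_, hB⟩
  have hBrep : IsBergman N (bergmanRep N) := by
    unfold bergmanRep
    split
    · next h => exact h.choose_spec
    · next h => exact absurd hex h
  have hEqB : bergmanRep N = ind (bset n) := bergman_unique hBrep hB
  -- canonical part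
  have hccons : ∀ i : ℤ, i ≠ 0 → ind (cset n) (i + 1) * ind (cset n) i = 0 := by
    intro i hi
    by_cases h1 : i ∈ cset n
    · by_cases h2 : i + 1 ∈ cset n
      · exact absurd (cset_pairs hn h1 h2) hi
      · simp [ind_apply, h2]
    · simp [ind_apply, h1]
  have hcval : pval (ind (cset n)) = (N : ℝ) := by
    rw [ind_pval, cset_sum hn, hcast, hN]
  have hA : IsAdmissible N (ind (cset n)) := ⟨⟨ind_le _, hcval⟩, hccons⟩
  have hc1 : ind (cset n) 1 = 1 :=
    (ind_eq_one_iff _ _).mpr ((mem_cset hn 1).mpr (Or.inr (Or.inr (Or.inl rfl))))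
  have hc0 : ind (cset n) 0 = 1 :=
    (ind_eq_one_iff _ _).mpr ((mem_cset hn 0).mpr (Or.inr (Or.inl rfl)))
  have hex' : ∃ c, IsAdmissible N c ∧ c 1 = 1 ∧ c 0 = 1 := ⟨_, hA, hc1, hc0⟩
  have hCprop : IsAdmissible N (canonicalRep N) ∧ canonicalRep N 1 = 1 ∧
      canonicalRep N 0 = 1 := by
    unfold canonicalRep
    split
    · next h => exact h.choose_spec
    · next h => exact absurd hex' h
  have hEqC : canonicalRep N = ind (cset n) :=
    admissible_unique hCprop.1 hCprop.2.1 hCprop.2.2 hA hc1 hc0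
  refine ⟨?_, hN, ?_⟩
  · intro i
    rw [hEqB, ind_eq_one_iff, mem_bset hn]
  · intro i
    rw [hEqC, ind_eq_one_iff, mem_cset hn]
end
end

section
/- For every n ≥ 1, the canonical representation of the Lucas number L_{2n+1} equals its Bergman representation, and it has digit 1 exactly at the even positions 2j for -n ≤ j ≤ n (so L_{2n+1} = ∑_{j=-n}^{n} φ^{2j}). -/
noncomputable section

attribute [local instance] Classical.propDecidable

lemma goldenPhi_eq : goldenPhi = Real.goldenRatio := rfl
lemma phi_zpow_pos (i : ℤ) : 0 < goldenPhi ^ i := zpow_pos phi_pos i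

lemma phi_zpow_succ (t : ℤ) : goldenPhi ^ (t + 1) = goldenPhi ^ t + goldenPhi ^ (t - 1) := by
  have h1 : goldenPhi ^ (t + 1) = goldenPhi ^ (t - 1) * goldenPhi ^ (2 : ℕ) := by
    rw [← zpow_natCast, ← zpow_add₀ phi_ne]; ring_nf
  rw [h1, phi_sq]
  have h2 : goldenPhi ^ t = goldenPhi ^ (t - 1) * goldenPhi ^ (1 : ℕ) := by
    rw [← zpow_natCast, ← zpow_add₀ phi_ne]; ring_nf
  rw [h2]; ring

def phiVal (c : ℤ →₀ ℕ) : ℝ := c.sum fun i a => (a : ℝ) * goldenPhi ^ i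

lemma phiVal_eq_sum {c : ℤ →₀ ℕ} {s : Finset ℤ} (h : c.support ⊆ s) :
    phiVal c = ∑ i ∈ s, (c i : ℝ) * goldenPhi ^ i :=
  Finsupp.sum_of_support_subset c h _ (by intro i _; simp)

lemma phiVal_nonneg (c : ℤ →₀ ℕ) : 0 ≤ phiVal c := by
  rw [phiVal_eq_sum (le_refl c.support)]
  exact Finset.sum_nonneg fun i _ => mul_nonneg (by positivity) (le_of_lt (phi_zpow_pos i))

/-- Key bound: a Bergman-type digit string supported below `t` has value `< φ^(t+1)`. -/
lemma phiVal_lt (m : ℕ) : ∀ (c : ℤ →₀ ℕ), c.support.card ≤ m → (∀ i, c i ≤ 1) →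
    (∀ i : ℤ, c (i + 1) * c i = 0) → ∀ t : ℤ, (∀ i ∈ c.support, i ≤ t) →
    phiVal c < goldenPhi ^ (t + 1) := by
  induction m with
  | zero =>
    intro c hc _ _ t _
    have h0 : c = 0 := Finsupp.support_eq_empty.mp (Finset.card_eq_zero.mp (Nat.le_zero.mp hc))
    rw [h0]
    simpa [phiVal] using phi_zpow_pos (t + 1)
  | succ m ih =>
    intro c hc h1 h2 t ht
    rcases Finset.eq_empty_or_nonempty c.support with he | hne
    · have h0 : c = 0 := Finsupp.support_eq_empty.mp he
      rw [h0]
      simpa [phiVal] using phi_zpow_pos (t + 1)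
    · set u := c.support.max' hne with hu
      have humem : u ∈ c.support := c.support.max'_mem hne
      have hut : u ≤ t := ht _ humem
      have hcu : c u = 1 :=
        le_antisymm (h1 u) (Nat.one_le_iff_ne_zero.mpr (Finsupp.mem_support_iff.mp humem))
      have hcu1 : c (u - 1) = 0 := by
        have := h2 (u - 1)
        rw [sub_add_cancel, hcu, one_mul] at this
        exact this
      set c' := Finsupp.erase u c with hc'
      have hsup : c'.support = c.support.erase u := Finsupp.support_erase
      have hcard : c'.support.card ≤ m := by
        rw [hsup]
        have := Finset.card_erase_of_mem humem
        omega
      have hb : ∀ i ∈ c'.support, i ≤ u - 2 := by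
        intro i hi
        rw [hsup, Finset.mem_erase] at hi
        have hiu : i ≤ u := c.support.le_max' i hi.2
        have hne1 : i ≠ u - 1 := by
          intro h
          exact Finsupp.mem_support_iff.mp hi.2 (h ▸ hcu1)
        have := hi.1
        omega
      have h1' : ∀ i, c' i ≤ 1 := by
        intro i
        by_cases h : i = u
        · simp [hc', h]
        · rw [hc', Finsupp.erase_ne h]; exact h1 i
      have h2' : ∀ i : ℤ, c' (i + 1) * c' i = 0 := by
        intro i
        have hle1 : c' (i + 1) ≤ c (i + 1) := by
          by_cases h : i + 1 = u
          · simp [hc', h]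
          · rw [hc', Finsupp.erase_ne h]
        have hle2 : c' i ≤ c i := by
          by_cases h : i = u
          · simp [hc', h]
          · rw [hc', Finsupp.erase_ne h]
        have := h2 i
        have : c' (i + 1) * c' i ≤ c (i + 1) * c i := Nat.mul_le_mul hle1 hle2
        omega
      have hlt : phiVal c' < goldenPhi ^ (u - 1) := by
        have := ih c' hcard h1' h2' (u - 2) hb
        have he : u - 2 + 1 = u - 1 := by ring
        rwa [he] at this
      -- split the value of c at u
      have hval : phiVal c = goldenPhi ^ u + phiVal c' := by
        rw [phiVal_eq_sum (le_refl c.support),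
          phiVal_eq_sum (by rw [hsup] : c'.support ⊆ c.support.erase u)]
        rw [← Finset.add_sum_erase _ _ humem, hcu]
        push_cast
        rw [one_mul]
        congr 1
        apply Finset.sum_congr rfl
        intro i hi
        rw [hc', Finsupp.erase_ne (Finset.ne_of_mem_erase hi)]
      have key : phiVal c < goldenPhi ^ (u + 1) := by
        rw [hval, phi_zpow_succ u]
        linarith
      calc phiVal c < goldenPhi ^ (u + 1) := key
        _ ≤ goldenPhi ^ (t + 1) := zpow_le_zpow_right₀ (le_of_lt one_lt_phi) (by omega)
/-- Core comparison: if `c` and `d` have the same value, agree above `m`, but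
`c m = 1` and `d m = 0`, with `d` a Bergman string, contradiction. -/
lemma no_top (c d : ℤ →₀ ℕ) (h1c : ∀ i, c i ≤ 1) (h1d : ∀ i, d i ≤ 1)
    (h2d : ∀ i : ℤ, d (i + 1) * d i = 0) (hval : phiVal c = phiVal d)
    (m : ℤ) (hcm : c m = 1) (hdm : d m = 0) (hagree : ∀ i, m < i → c i = d i) : False := by
  classical
  set s : Finset ℤ := insert m (c.support ∪ d.support) with hs
  have hms : m ∈ s := Finset.mem_insert_self _ _
  have hcs : c.support ⊆ s := fun i hi => Finset.mem_insert_of_mem (Finset.mem_union_left _ hi)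
  have hds : d.support ⊆ s := fun i hi => Finset.mem_insert_of_mem (Finset.mem_union_right _ hi)
  have hsum : ∑ i ∈ s, (c i : ℝ) * goldenPhi ^ i = ∑ i ∈ s, (d i : ℝ) * goldenPhi ^ i := by
    rw [← phiVal_eq_sum hcs, ← phiVal_eq_sum hds, hval]
  rw [← Finset.add_sum_erase _ _ hms, ← Finset.add_sum_erase _ (fun i => (d i : ℝ) * goldenPhi ^ i) hms,
    hcm, hdm] at hsum
  push_cast at hsum
  rw [one_mul, zero_mul, zero_add] at hsum
  -- split the erased sums at < m
  set s' := s.erase m with hs'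
  have hsplitc := Finset.sum_filter_add_sum_filter_not s' (fun i => i < m)
    (fun i => (c i : ℝ) * goldenPhi ^ i)
  have hsplitd := Finset.sum_filter_add_sum_filter_not s' (fun i => i < m)
    (fun i => (d i : ℝ) * goldenPhi ^ i)
  have hhigh : ∑ i ∈ s'.filter (fun i => ¬ i < m), (c i : ℝ) * goldenPhi ^ i
      = ∑ i ∈ s'.filter (fun i => ¬ i < m), (d i : ℝ) * goldenPhi ^ i := by
    apply Finset.sum_congr rfl
    intro i hi
    rw [Finset.mem_filter] at hi
    have hne : i ≠ m := Finset.ne_of_mem_erase hi.1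
    have : m < i := lt_of_le_of_ne (not_lt.mp hi.2) (Ne.symm hne)
    rw [hagree i this]
  set Ac := ∑ i ∈ s'.filter (fun i => i < m), (c i : ℝ) * goldenPhi ^ i with hAc
  set Ad := ∑ i ∈ s'.filter (fun i => i < m), (d i : ℝ) * goldenPhi ^ i with hAd
  have heq : goldenPhi ^ m + Ac = Ad := by
    rw [← hsplitc, ← hsplitd, hhigh] at hsum
    linarith
  have hAcnn : 0 ≤ Ac := Finset.sum_nonneg fun i _ =>
    mul_nonneg (by positivity) (le_of_lt (phi_zpow_pos i))
  -- Ad is the value of the filtered d, which is < φ^m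
  set d' := Finsupp.filter (fun i => i < m) d with hd'
  have hd'app : ∀ i, d' i = if i < m then d i else 0 := fun i => Finsupp.filter_apply _ d i
  have hd'sup : d'.support ⊆ s'.filter (fun i => i < m) := by
    intro i hi
    rw [hd', Finsupp.support_filter, Finset.mem_filter] at hi
    refine Finset.mem_filter.mpr ⟨Finset.mem_erase.mpr ⟨by omega, hds hi.1⟩, hi.2⟩
  have hAdval : Ad = phiVal d' := by
    rw [phiVal_eq_sum hd'sup, hAd]
    apply Finset.sum_congr rfl
    intro i hi
    rw [Finset.mem_filter] at hi
    rw [hd'app i, if_pos hi.2]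
  have h1d' : ∀ i, d' i ≤ 1 := by
    intro i; rw [hd'app]; split_ifs; exacts [h1d i, Nat.zero_le 1]
  have h2d' : ∀ i : ℤ, d' (i + 1) * d' i = 0 := by
    intro i
    have l1 : d' (i + 1) ≤ d (i + 1) := by rw [hd'app]; split_ifs <;> omega
    have l2 : d' i ≤ d i := by rw [hd'app]; split_ifs <;> omega
    have := h2d i
    have := Nat.mul_le_mul l1 l2
    omega
  have hbd : ∀ i ∈ d'.support, i ≤ m - 1 := by
    intro i hi
    rw [hd', Finsupp.support_filter, Finset.mem_filter] at hi
    omega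
  have hlt : phiVal d' < goldenPhi ^ m := by
    have := phiVal_lt d'.support.card d' (le_refl _) h1d' h2d' (m - 1) hbd
    rwa [sub_add_cancel] at this
  have := phi_zpow_pos m
  rw [hAdval] at heq
  linarith

lemma phiVal_erase (c : ℤ →₀ ℕ) (j : ℤ) :
    phiVal (Finsupp.erase j c) = phiVal c - (c j : ℝ) * goldenPhi ^ j := by
  classical
  set s := insert j c.support with hs
  have hjs : j ∈ s := Finset.mem_insert_self _ _
  have hcs : c.support ⊆ s := Finset.subset_insert _ _
  have hes : (Finsupp.erase j c).support ⊆ s := by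
    rw [Finsupp.support_erase]
    exact fun i hi => hcs (Finset.mem_of_mem_erase hi)
  rw [phiVal_eq_sum hcs, phiVal_eq_sum hes]
  rw [← Finset.add_sum_erase _ (fun i => (c i : ℝ) * goldenPhi ^ i) hjs,
    ← Finset.add_sum_erase _ (fun i => ((Finsupp.erase j c) i : ℝ) * goldenPhi ^ i) hjs]
  rw [Finsupp.erase_same]
  push_cast
  rw [zero_mul, zero_add]
  have : ∑ i ∈ s.erase j, ((Finsupp.erase j c) i : ℝ) * goldenPhi ^ i
      = ∑ i ∈ s.erase j, (c i : ℝ) * goldenPhi ^ i := by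
    apply Finset.sum_congr rfl
    intro i hi
    rw [Finsupp.erase_ne (Finset.ne_of_mem_erase hi)]
  rw [this]; ring

lemma phi_zpow_add2 (k : ℤ) : goldenPhi ^ (k + 2) = goldenPhi ^ (k + 1) + goldenPhi ^ k := by
  have h := phi_zpow_succ (k + 1)
  rw [(by ring : k + 1 + 1 = k + 2), (by ring : k + 1 - 1 = k)] at h
  exact h

/-- One carry step: replace digits 1 at `k, k+1` by a digit 1 at `k+2`. -/
lemma carry_step (k : ℤ) (c : ℤ →₀ ℕ) (h1 : ∀ i, c i ≤ 1)
    (h2 : ∀ i : ℤ, i ≠ k → c (i + 1) * c i = 0) (hkk : c (k + 1) * c k ≠ 0) :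
    ∃ c'' : ℤ →₀ ℕ, (∀ i, c'' i ≤ 1) ∧ (∀ i : ℤ, i ≠ k + 2 → c'' (i + 1) * c'' i = 0) ∧
      phiVal c'' = phiVal c ∧ (∀ i, i < k → c'' i = c i) ∧ c'' k = 0 ∧ c'' (k + 1) = 0 ∧
      c''.support ⊆ c.support ∪ {k + 2} := by
  classical
  have hne2 := Nat.mul_ne_zero_iff.mp hkk
  have hck : c k = 1 := by have := h1 k; omega
  have hck1 : c (k + 1) = 1 := by have := h1 (k + 1); omega
  have hck2 : c (k + 2) = 0 := by
    have h := h2 (k + 1) (by omega)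
    rw [(by ring : k + 1 + 1 = k + 2), hck1, mul_one] at h
    exact h
  set c'' : ℤ →₀ ℕ := Finsupp.erase (k + 1) (Finsupp.erase k c) + Finsupp.single (k + 2) 1
    with hc''
  have happ : ∀ i, i ≠ k → i ≠ k + 1 → i ≠ k + 2 → c'' i = c i := by
    intro i h1' h2' h3'
    rw [hc'', Finsupp.add_apply, Finsupp.erase_ne h2', Finsupp.erase_ne h1',
      Finsupp.single_apply, if_neg (by omega), add_zero]
  have happk : c'' k = 0 := by
    rw [hc'', Finsupp.add_apply, Finsupp.erase_ne (by omega : k ≠ k + 1), Finsupp.erase_same,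
      Finsupp.single_apply, if_neg (by omega)]
    norm_num
  have happk1 : c'' (k + 1) = 0 := by
    rw [hc'', Finsupp.add_apply, Finsupp.erase_same, Finsupp.single_apply, if_neg (by omega)]
    norm_num
  have happk2 : c'' (k + 2) = 1 := by
    rw [hc'', Finsupp.add_apply, Finsupp.erase_ne (by omega : k + 2 ≠ k + 1),
      Finsupp.erase_ne (by omega : k + 2 ≠ k), hck2, Finsupp.single_apply, if_pos rfl]
  refine ⟨c'', ?_, ?_, ?_, ?_, happk, happk1, ?_⟩
  · intro i
    by_cases e1 : i = k
    · rw [e1, happk]; omega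
    by_cases e2 : i = k + 1
    · rw [e2, happk1]; omega
    by_cases e3 : i = k + 2
    · rw [e3, happk2]
    · rw [happ i e1 e2 e3]; exact h1 i
  · intro i hi
    by_cases e1 : i = k - 1
    · have hz : c'' (i + 1) = 0 := by rw [(by omega : i + 1 = k), happk]
      rw [hz, zero_mul]
    by_cases e2 : i = k
    · rw [e2, happk, mul_zero]
    by_cases e3 : i = k + 1
    · have hz : c'' i = 0 := by rw [e3, happk1]
      rw [hz, mul_zero]
    · rw [happ (i + 1) (by omega) (by omega) (by omega), happ i (by omega) (by omega) (by omega)]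
      exact h2 i (by omega)
  · have hval : phiVal c'' = phiVal c - (c k : ℝ) * goldenPhi ^ k
        - (c (k + 1) : ℝ) * goldenPhi ^ (k + 1) + goldenPhi ^ (k + 2) := by
      rw [hc'', phiVal]
      rw [Finsupp.sum_add_index' (by intro a; simp) (by intro a b1 b2; push_cast; ring)]
      have h1v : (Finsupp.erase (k+1) (Finsupp.erase k c)).sum
          (fun i a => (a : ℝ) * goldenPhi ^ i) = phiVal (Finsupp.erase (k+1) (Finsupp.erase k c)) := rfl
      rw [h1v, phiVal_erase, phiVal_erase, Finsupp.erase_ne (by omega : k + 1 ≠ k)]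
      rw [Finsupp.sum_single_index (by simp)]
      push_cast
      ring
    rw [hval, hck, hck1, phi_zpow_add2]
    push_cast
    ring
  · intro i hi
    exact happ i (by omega) (by omega) (by omega)
  · intro i hi
    rw [Finsupp.mem_support_iff] at hi
    by_cases e3 : i = k + 2
    · exact Finset.mem_union_right _ (by simp [e3])
    by_cases e1 : i = k
    · rw [e1, happk] at hi; omega
    by_cases e2 : i = k + 1
    · rw [e2, happk1] at hi; omega
    · rw [happ i e1 e2 e3] at hi
      exact Finset.mem_union_left _ (Finsupp.mem_support_iff.mpr hi)
/-- Carry propagation: an almost-Bergman string (single possible violation at `(k+1, k)`)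
with bounded support can be converted into a Bergman string agreeing below `k`. -/
lemma carry (B : ℕ) : ∀ (k : ℤ) (c : ℤ →₀ ℕ), (∀ i, c i ≤ 1) →
    (∀ i : ℤ, i ≠ k → c (i + 1) * c i = 0) → (∀ i ∈ c.support, i ≤ k + B) →
    ∃ d : ℤ →₀ ℕ, (∀ i, d i ≤ 1) ∧ (∀ i : ℤ, d (i + 1) * d i = 0) ∧
      phiVal d = phiVal c ∧ ∀ i, i < k → d i = c i := by
  induction B with
  | zero =>
    intro k c h1 h2 hb
    have hck1 : c (k + 1) = 0 := by
      by_contra h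
      have := hb (k + 1) (Finsupp.mem_support_iff.mpr h)
      omega
    refine ⟨c, h1, ?_, rfl, fun i _ => rfl⟩
    intro i
    by_cases h : i = k
    · rw [h, hck1, zero_mul]
    · exact h2 i h
  | succ B ih =>
    intro k c h1 h2 hb
    by_cases hkk : c (k + 1) * c k = 0
    · refine ⟨c, h1, ?_, rfl, fun i _ => rfl⟩
      intro i
      by_cases h : i = k
      · rw [h]; exact hkk
      · exact h2 i h
    · obtain ⟨c'', h1'', h2'', hval'', hlow'', hk0, hk10, hsup''⟩ := carry_step k c h1 h2 hkk
      have hb'' : ∀ i ∈ c''.support, i ≤ (k + 2) + B := by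
        intro i hi
        rcases Finset.mem_union.mp (hsup'' hi) with h | h
        · have := hb i h; omega
        · have := Finset.mem_singleton.mp h; omega
      obtain ⟨d, hd1, hd2, hdv, hdlow⟩ := ih (k + 2) c'' h1'' h2'' hb''
      refine ⟨d, hd1, hd2, by rw [hdv, hval''], ?_⟩
      intro i hi
      rw [hdlow i (by omega), hlow'' i hi]
/-- The explicit Bergman representation of `L_{2n+1}`: digit 1 at even positions `2j`,
`-n ≤ j ≤ n`. -/
def eRep (n : ℕ) : ℤ →₀ ℕ :=
  ⟨(Finset.Icc (-(n : ℤ)) (n : ℤ)).image (fun j => 2 * j),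
   fun i => if ∃ j : ℤ, -(n : ℤ) ≤ j ∧ j ≤ (n : ℤ) ∧ i = 2 * j then 1 else 0,
   by
     intro i
     simp only [Finset.mem_image, Finset.mem_Icc]
     constructor
     · rintro ⟨j, hj, rfl⟩
       rw [if_pos ⟨j, hj.1, hj.2, rfl⟩]
       norm_num
     · intro h
       split_ifs at h with hP
       · obtain ⟨j, h1, h2, h3⟩ := hP
         exact ⟨j, ⟨h1, h2⟩, h3.symm⟩
       · exact absurd rfl h⟩

lemma eRep_apply (n : ℕ) (i : ℤ) :
    eRep n i = if ∃ j : ℤ, -(n : ℤ) ≤ j ∧ j ≤ (n : ℤ) ∧ i = 2 * j then 1 else 0 := rfl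

lemma eRep_le_one (n : ℕ) (i : ℤ) : eRep n i ≤ 1 := by
  rw [eRep_apply]; split_ifs <;> norm_num

lemma eRep_bergman_cond (n : ℕ) (i : ℤ) : eRep n (i + 1) * eRep n i = 0 := by
  rw [eRep_apply, eRep_apply]
  split_ifs with hA hB
  · obtain ⟨j, _, _, hj⟩ := hA
    obtain ⟨j', _, _, hj'⟩ := hB
    omega
  all_goals norm_num

lemma eRep_zero (n : ℕ) : eRep n 0 = 1 := by
  rw [eRep_apply, if_pos ⟨0, by omega, by omega, by omega⟩]

lemma eRep_val (n : ℕ) :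
    phiVal (eRep n) = ∑ j ∈ Finset.Icc (-(n : ℤ)) (n : ℤ), goldenPhi ^ (2 * j) := by
  have hsup : (eRep n).support = (Finset.Icc (-(n : ℤ)) (n : ℤ)).image (fun j => 2 * j) := rfl
  rw [phiVal_eq_sum (le_of_eq hsup)]
  rw [Finset.sum_image (by intro x _ y _ h; have h' : 2 * x = 2 * y := h; omega)]
  apply Finset.sum_congr rfl
  intro j hj
  rw [Finset.mem_Icc] at hj
  rw [eRep_apply, if_pos ⟨j, hj.1, hj.2, rfl⟩]
  norm_num

lemma lucas_binet (k : ℕ) : (lucas k : ℝ) = Real.goldenRatio ^ k + Real.goldenConj ^ k := by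
  induction k using Nat.strong_induction_on with
  | _ k ih =>
    match k with
    | 0 => simp [lucas]; norm_num
    | 1 =>
      show ((lucas 1 : ℕ) : ℝ) = _
      rw [pow_one, pow_one, Real.goldenRatio_add_goldenConj]
      norm_num [lucas]
    | (k + 2) =>
      have h0 := ih k (by omega)
      have h1 := ih (k + 1) (by omega)
      have hL : lucas (k + 2) = lucas (k + 1) + lucas k := rfl
      rw [hL]
      push_cast
      rw [h0, h1]
      have hg : Real.goldenRatio ^ (k + 2) = Real.goldenRatio ^ (k + 1) + Real.goldenRatio ^ k := by
        have : Real.goldenRatio ^ (k + 2) = Real.goldenRatio ^ k * Real.goldenRatio ^ 2 := by ring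
        rw [this, Real.goldenRatio_sq]; ring
      have hc : Real.goldenConj ^ (k + 2) = Real.goldenConj ^ (k + 1) + Real.goldenConj ^ k := by
        have : Real.goldenConj ^ (k + 2) = Real.goldenConj ^ k * Real.goldenConj ^ 2 := by ring
        rw [this, Real.goldenConj_sq]; ring
      rw [hg, hc]; ring

lemma conj_pow_even (m : ℕ) : Real.goldenConj ^ (2 * m) = goldenPhi ^ (-(2 * m : ℤ)) := by
  have hconj : Real.goldenConj = -goldenPhi⁻¹ := by
    rw [goldenPhi_eq, Real.inv_goldenRatio]; ring
  have h2 : Real.goldenConj ^ 2 = (goldenPhi ^ 2)⁻¹ := by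
    rw [hconj]; field_simp
  rw [pow_mul, h2, ← inv_pow, ← pow_mul, inv_pow, ← zpow_natCast goldenPhi (2 * m),
    ← zpow_neg]
  congr 1

lemma lucas_even_eq (m : ℕ) :
    (lucas (2 * m) : ℝ) = goldenPhi ^ ((2 * m : ℕ) : ℤ) + goldenPhi ^ (-(2 * m : ℤ)) := by
  rw [lucas_binet, conj_pow_even, ← goldenPhi_eq, zpow_natCast]

lemma lucas_sum (n : ℕ) :
    (lucas (2 * n + 1) : ℝ) = ∑ j ∈ Finset.Icc (-(n : ℤ)) (n : ℤ), goldenPhi ^ (2 * j) := by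
  induction n with
  | zero =>
    norm_num [lucas]
  | succ n ih =>
    have hcast : (-(↑(n + 1) : ℤ)) = -(n : ℤ) - 1 := by push_cast; ring
    have hcast2 : ((↑(n + 1) : ℤ)) = (n : ℤ) + 1 := by push_cast; ring
    have hins : Finset.Icc (-(n : ℤ) - 1) ((n : ℤ) + 1) =
        insert (-(n : ℤ) - 1) (insert ((n : ℤ) + 1) (Finset.Icc (-(n : ℤ)) (n : ℤ))) := by
      ext i
      simp only [Finset.mem_Icc, Finset.mem_insert]
      omega
    rw [hcast, hcast2, hins]
    rw [Finset.sum_insert (by simp only [Finset.mem_insert, Finset.mem_Icc]; omega),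
      Finset.sum_insert (by simp only [Finset.mem_Icc]; omega)]
    rw [← ih]
    have hL : lucas (2 * (n + 1) + 1) = lucas (2 * (n + 1)) + lucas (2 * n + 1) := by
      have he : 2 * (n + 1) + 1 = (2 * n + 1) + 2 := by ring
      have he2 : (2 * n + 1) + 1 = 2 * (n + 1) := by ring
      rw [he, ← he2]
      rfl
    rw [hL]
    have hbin := lucas_even_eq (n + 1)
    push_cast at hbin ⊢
    have expA : (2 : ℤ) * (-(n : ℤ) - 1) = -(2 * ((n : ℤ) + 1)) := by ring
    rw [expA]
    linarith [hbin]
lemma eRep_isBergman (n : ℕ) : IsBergman (lucas (2 * n + 1)) (eRep n) := by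
  refine ⟨⟨eRep_le_one n, ?_⟩, eRep_bergman_cond n⟩
  show phiVal (eRep n) = _
  rw [eRep_val, ← lucas_sum]

lemma bergmanRep_lucas (n : ℕ) : bergmanRep (lucas (2 * n + 1)) = eRep n := by
  have hex : ∃ c, IsBergman (lucas (2 * n + 1)) c := ⟨eRep n, eRep_isBergman n⟩
  have hb : IsBergman (lucas (2 * n + 1)) (bergmanRep (lucas (2 * n + 1))) := by
    unfold bergmanRep
    rw [dif_pos hex]
    exact hex.choose_spec
  exact bergman_unique hb (eRep_isBergman n)

lemma no_special (n : ℕ) :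
    ¬ ∃ c, IsAdmissible (lucas (2 * n + 1)) c ∧ c 1 = 1 ∧ c 0 = 1 := by
  rintro ⟨c, ⟨⟨h1, hval⟩, h2⟩, hc1, hc0⟩
  have hkk : c (0 + 1) * c 0 ≠ 0 := by rw [zero_add, hc1, hc0]; norm_num
  obtain ⟨c'', h1'', h2'', hval'', hlow'', hk0, hk10, hsup''⟩ :=
    carry_step 0 c h1 h2 hkk
  have h2b : ∀ i : ℤ, i ≠ 2 → c'' (i + 1) * c'' i = 0 := fun i hi => h2'' i (by omega)
  set B := c''.support.sup (fun i => i.toNat) with hB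
  have hbd : ∀ i ∈ c''.support, i ≤ 2 + (B : ℤ) := by
    intro i hi
    have h1' : i.toNat ≤ B := Finset.le_sup (f := fun i : ℤ => i.toNat) hi
    have := Int.self_le_toNat i
    omega
  obtain ⟨d, hd1, hd2, hdv, hdlow⟩ := carry B 2 c'' h1'' h2b hbd
  have hdB : IsBergman (lucas (2 * n + 1)) d := by
    refine ⟨⟨hd1, ?_⟩, hd2⟩
    show phiVal d = _
    rw [hdv, hval'']
    exact hval
  have heq := bergman_unique hdB (eRep_isBergman n)
  have hd0 : d 0 = 0 := by rw [hdlow 0 (by omega), hk0]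
  rw [heq, eRep_zero] at hd0
  exact one_ne_zero hd0

theorem stmt4 (n : ℕ) (hn : 1 ≤ n) :
    canonicalRep (lucas (2 * n + 1)) = bergmanRep (lucas (2 * n + 1)) ∧
    (∀ i : ℤ, canonicalRep (lucas (2 * n + 1)) i = 1 ↔
      ∃ j : ℤ, -(n : ℤ) ≤ j ∧ j ≤ (n : ℤ) ∧ i = 2 * j) ∧
    (lucas (2 * n + 1) : ℝ) = ∑ j ∈ Finset.Icc (-(n : ℤ)) (n : ℤ), goldenPhi ^ (2 * j) := by
  have hcan : canonicalRep (lucas (2 * n + 1)) = bergmanRep (lucas (2 * n + 1)) := by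
    unfold canonicalRep
    rw [dif_neg (no_special n)]
  have hb := bergmanRep_lucas n
  refine ⟨hcan, ?_, lucas_sum n⟩
  intro i
  rw [hcan, hb, eRep_apply]
  constructor
  · intro h
    by_contra hP
    rw [if_neg hP] at h
    exact one_ne_zero h.symm
  · intro h
    rw [if_pos h]
end
end

section
/- For every n ≥ 1, the canonical representation of L_{2n} + 1 equals its Bergman representation, and it has digit 1 exactly at positions 2n, 0 and -2n (so L_{2n} + 1 = φ^{2n} + 1 + φ^{-2n}). -/
noncomputable section

attribute [local instance] Classical.propDecidable

namespace Stmt5Aux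
open goldenRatio Real

lemma phi_pos : 0 < goldenPhi := goldenRatio_pos
lemma one_lt_phi : 1 < goldenPhi := one_lt_goldenRatio
lemma phi_ne : goldenPhi ≠ 0 := goldenRatio_ne_zero
lemma phi_sq : goldenPhi ^ 2 = goldenPhi + 1 := goldenRatio_sq

/-- the value of a digit set -/
def V (s : Finset ℤ) : ℝ := ∑ i ∈ s, goldenPhi ^ i

/-- no two consecutive elements -/
def Berg (s : Finset ℤ) : Prop := ∀ i ∈ s, i + 1 ∉ s

lemma V_nonneg (s : Finset ℤ) : 0 ≤ V s :=
  Finset.sum_nonneg fun i _ => (zpow_pos phi_pos i).le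

lemma V_pos {s : Finset ℤ} (h : s.Nonempty) : 0 < V s :=
  Finset.sum_pos (fun i _ => zpow_pos phi_pos i) h

lemma Berg.mono {s t : Finset ℤ} (h : Berg t) (hst : s ⊆ t) : Berg s :=
  fun i hi hi1 => h i (hst hi) (hst hi1)

lemma zpow_succ_eq (k : ℤ) : goldenPhi ^ (k + 1) = goldenPhi ^ k + goldenPhi ^ (k - 1) := by
  have : goldenPhi ^ (k + 1) = goldenPhi ^ (k - 1) * goldenPhi ^ 2 := by
    rw [← zpow_natCast goldenPhi 2, ← zpow_add₀ phi_ne]; ring_nf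
  rw [this, phi_sq]
  rw [mul_add, mul_one, ← zpow_add_one₀ phi_ne]
  ring_nf

lemma V_erase_add {s : Finset ℤ} {a : ℤ} (h : a ∈ s) : V (s.erase a) + goldenPhi ^ a = V s :=
  Finset.sum_erase_add s _ h

lemma V_lt : ∀ s : Finset ℤ, Berg s → ∀ k : ℤ, (∀ i ∈ s, i ≤ k) → V s < goldenPhi ^ (k + 1) := by
  intro s
  induction s using Finset.strongInduction with
  | _ s ih =>
    intro hB k hk
    rcases s.eq_empty_or_nonempty with rfl | hne
    · simpa [V] using zpow_pos phi_pos (k + 1)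
    · set m := s.max' hne with hm_def
      have hm : m ∈ s := s.max'_mem hne
      have hVs : V s = V (s.erase m) + goldenPhi ^ m := (V_erase_add hm).symm
      have herase : ∀ i ∈ s.erase m, i ≤ m - 2 := by
        intro i hi
        have his : i ∈ s := Finset.mem_of_mem_erase hi
        have hile : i ≤ m := s.le_max' i his
        have hne1 : i ≠ m := Finset.ne_of_mem_erase hi
        have hne2 : i ≠ m - 1 := by
          intro h
          exact hB i his (by rw [h]; simpa using hm)
        omega
      have h1 : V (s.erase m) < goldenPhi ^ (m - 2 + 1) :=
        ih (s.erase m) (Finset.erase_ssubset hm) (hB.mono (Finset.erase_subset _ _)) _ herase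
      have h2 : (m - 2 + 1 : ℤ) = m - 1 := by ring
      rw [h2] at h1
      have hmk : m ≤ k := s.max'_le hne k hk
      calc V s = V (s.erase m) + goldenPhi ^ m := hVs
        _ < goldenPhi ^ (m - 1) + goldenPhi ^ m := by linarith
        _ = goldenPhi ^ (m + 1) := by rw [zpow_succ_eq]; ring
        _ ≤ goldenPhi ^ (k + 1) := zpow_le_zpow_right₀ one_lt_phi.le (by omega)

lemma V_inj : ∀ s t : Finset ℤ, Berg s → Berg t → V s = V t → s = t := by
  intro s
  induction s using Finset.strongInduction with
  | _ s ih =>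
    intro t hs ht hV
    rcases s.eq_empty_or_nonempty with rfl | hsne
    · rcases t.eq_empty_or_nonempty with rfl | htne
      · rfl
      · exact absurd hV.symm (by simpa [V] using (V_pos htne).ne')
    rcases t.eq_empty_or_nonempty with rfl | htne
    · exact absurd hV (by simpa [V] using (V_pos hsne).ne')
    set m := s.max' hsne with hmdef
    set l := t.max' htne with hldef
    have hm : m ∈ s := s.max'_mem hsne
    have hl : l ∈ t := t.max'_mem htne
    have e1 := V_erase_add hm
    have e2 := V_erase_add hl
    have n1 := V_nonneg (s.erase m)
    have n2 := V_nonneg (t.erase l)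
    have hml : m = l := by
      have h3 : V s < goldenPhi ^ (m + 1) := V_lt s hs m (fun i hi => s.le_max' i hi)
      have h4 : V t < goldenPhi ^ (l + 1) := V_lt t ht l (fun i hi => t.le_max' i hi)
      have hlt1 : goldenPhi ^ l < goldenPhi ^ (m + 1) := by linarith
      have hlt2 : goldenPhi ^ m < goldenPhi ^ (l + 1) := by linarith
      have := (zpow_lt_zpow_iff_right₀ one_lt_phi).mp hlt1
      have := (zpow_lt_zpow_iff_right₀ one_lt_phi).mp hlt2
      omega
    rw [← hml] at e2
    have hVer : V (s.erase m) = V (t.erase m) := by linarith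
    have heq : s.erase m = t.erase m :=
      ih (s.erase m) (Finset.erase_ssubset hm) (t.erase m)
        (hs.mono (Finset.erase_subset _ _)) (ht.mono (Finset.erase_subset _ _)) hVer
    calc s = insert m (s.erase m) := (Finset.insert_erase hm).symm
      _ = insert m (t.erase m) := by rw [heq]
      _ = t := by rw [hml]; exact Finset.insert_erase hl

lemma support_one {c : ℤ →₀ ℕ} (hle : ∀ i, c i ≤ 1) {i : ℤ} (hi : i ∈ c.support) : c i = 1 :=
  le_antisymm (hle i) (Nat.one_le_iff_ne_zero.mpr (Finsupp.mem_support_iff.mp hi))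

lemma val_eq_V (c : ℤ →₀ ℕ) (hle : ∀ i, c i ≤ 1) :
    (c.sum fun i a => (a : ℝ) * goldenPhi ^ i) = V c.support := by
  rw [Finsupp.sum, V]
  exact Finset.sum_congr rfl fun i hi => by rw [support_one hle hi]; simp

lemma support_berg {c : ℤ →₀ ℕ} (h : ∀ i : ℤ, c (i + 1) * c i = 0) : Berg c.support := by
  intro i hi hi1
  have := h i
  rw [Finsupp.mem_support_iff] at hi hi1
  exact hi (by simpa [hi1] using this)

lemma lucas_real : ∀ k : ℕ, (lucas k : ℝ) = goldenRatio ^ k + goldenConj ^ k := by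
  have key : ∀ k, (lucas k : ℝ) = goldenRatio ^ k + goldenConj ^ k ∧
      (lucas (k+1) : ℝ) = goldenRatio ^ (k+1) + goldenConj ^ (k+1) := by
    intro k
    induction k with
    | zero =>
      refine ⟨by norm_num [lucas], ?_⟩
      have := goldenRatio_add_goldenConj
      norm_num [lucas]
    | succ k ih =>
      refine ⟨ih.2, ?_⟩
      have h1 : (lucas (k+2) : ℝ) = (lucas (k+1) : ℝ) + lucas k := by
        norm_cast
      have hg : goldenRatio ^ (k+2) = goldenRatio ^ (k+1) + goldenRatio ^ k := by
        calc goldenRatio ^ (k+2) = goldenRatio ^ k * goldenRatio ^ 2 := by ring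
          _ = goldenRatio ^ k * (goldenRatio + 1) := by rw [goldenRatio_sq]
          _ = goldenRatio ^ (k+1) + goldenRatio ^ k := by ring
      have hc : goldenConj ^ (k+2) = goldenConj ^ (k+1) + goldenConj ^ k := by
        calc goldenConj ^ (k+2) = goldenConj ^ k * goldenConj ^ 2 := by ring
          _ = goldenConj ^ k * (goldenConj + 1) := by rw [goldenConj_sq]
          _ = goldenConj ^ (k+1) + goldenConj ^ k := by ring
      rw [h1, ih.1, ih.2, hg, hc]; ring
  exact fun k => (key k).1

lemma goldConj_even_pow (n : ℕ) : goldenConj ^ (2 * n) = goldenPhi ^ (-(2 * n : ℤ)) := by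
  have h1 : goldenConj = -goldenPhi⁻¹ := by
    have := inv_goldenRatio
    show goldenConj = -(goldenRatio)⁻¹
    rw [this]; ring
  rw [h1]
  rw [Even.neg_pow (even_two_mul n)]
  rw [zpow_neg, ← inv_zpow]
  norm_cast

lemma lucas_phi (n : ℕ) :
    (lucas (2 * n) : ℝ) = goldenPhi ^ ((2 * n : ℕ) : ℤ) + goldenPhi ^ (-(2 * n : ℤ)) := by
  rw [lucas_real, goldConj_even_pow]
  show goldenPhi ^ (2 * n) + _ = _
  norm_cast

/-- digit positions of the Bergman representation of `L_{2n} + 1` -/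
def bset (n : ℕ) : Finset ℤ := {(2 * n : ℤ), 0, -(2 * n : ℤ)}

/-- digit positions of the Bergman representation of `L_{2n}` -/
def uset (n : ℕ) : Finset ℤ := {(2 * n : ℤ), -(2 * n : ℤ)}

/-- the Bergman representation of `L_{2n} + 1` as a finsupp -/
def brep (n : ℕ) : ℤ →₀ ℕ :=
  ⟨bset n, fun i => if i ∈ bset n then 1 else 0, by
    intro a; by_cases h : a ∈ bset n <;> simp [h]⟩

lemma brep_apply (n : ℕ) (i : ℤ) : brep n i = if i ∈ bset n then 1 else 0 := rfl

lemma brep_support (n : ℕ) : (brep n).support = bset n := rfl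

lemma mem_bset {n : ℕ} {i : ℤ} :
    i ∈ bset n ↔ i = (2 * n : ℤ) ∨ i = 0 ∨ i = -(2 * n : ℤ) := by
  simp [bset]

lemma mem_uset {n : ℕ} {i : ℤ} : i ∈ uset n ↔ i = (2 * n : ℤ) ∨ i = -(2 * n : ℤ) := by
  simp [uset]

lemma V_bset (n : ℕ) (hn : 1 ≤ n) :
    V (bset n) = goldenPhi ^ (2 * n : ℤ) + 1 + goldenPhi ^ (-(2 * n : ℤ)) := by
  have hn' : (1 : ℤ) ≤ (n : ℤ) := by exact_mod_cast hn
  have h1 : (2 * n : ℤ) ∉ ({0, -(2 * n : ℤ)} : Finset ℤ) := by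
    simp only [Finset.mem_insert, Finset.mem_singleton]; omega
  have h2 : (0 : ℤ) ∉ ({-(2 * n : ℤ)} : Finset ℤ) := by
    simp only [Finset.mem_singleton]; omega
  show (∑ i ∈ insert (2 * n : ℤ) {0, -(2 * n : ℤ)}, goldenPhi ^ i) = _
  rw [Finset.sum_insert h1, Finset.sum_insert h2, Finset.sum_singleton]
  simp only [zpow_zero]
  ring

lemma V_uset (n : ℕ) (hn : 1 ≤ n) :
    V (uset n) = goldenPhi ^ (2 * n : ℤ) + goldenPhi ^ (-(2 * n : ℤ)) := by
  have hn' : (1 : ℤ) ≤ (n : ℤ) := by exact_mod_cast hn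
  have h1 : (2 * n : ℤ) ∉ ({-(2 * n : ℤ)} : Finset ℤ) := by
    simp only [Finset.mem_singleton]; omega
  show (∑ i ∈ insert (2 * n : ℤ) {-(2 * n : ℤ)}, goldenPhi ^ i) = _
  rw [Finset.sum_insert h1, Finset.sum_singleton]

lemma berg_bset (n : ℕ) (hn : 1 ≤ n) : Berg (bset n) := by
  have hn' : (1 : ℤ) ≤ (n : ℤ) := by exact_mod_cast hn
  intro i hi hi1
  rw [mem_bset] at hi hi1
  omega

lemma berg_uset (n : ℕ) (hn : 1 ≤ n) : Berg (uset n) := by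
  have hn' : (1 : ℤ) ≤ (n : ℤ) := by exact_mod_cast hn
  intro i hi hi1
  rw [mem_uset] at hi hi1
  omega

lemma Nval (n : ℕ) : ((lucas (2 * n) + 1 : ℕ) : ℝ) =
    goldenPhi ^ (2 * n : ℤ) + 1 + goldenPhi ^ (-(2 * n : ℤ)) := by
  push_cast
  rw [lucas_phi]
  push_cast
  ring

lemma brep_bergman (n : ℕ) (hn : 1 ≤ n) : IsBergman (lucas (2 * n) + 1) (brep n) := by
  have hle : ∀ i, brep n i ≤ 1 := by
    intro i; rw [brep_apply]; split <;> simp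
  refine ⟨⟨hle, ?_⟩, ?_⟩
  · rw [val_eq_V _ hle, brep_support, V_bset n hn, ← Nval n]
  · intro i
    rw [brep_apply, brep_apply]
    by_cases h1 : i + 1 ∈ bset n
    · by_cases h0 : i ∈ bset n
      · exact absurd h1 (berg_bset n hn i h0)
      · simp [h0]
    · simp [h1]

lemma berg_unique {N : ℕ} {c d : ℤ →₀ ℕ} (hc : IsBergman N c) (hd : IsBergman N d) : c = d := by
  obtain ⟨⟨hcle, hcv⟩, hcb⟩ := hc
  obtain ⟨⟨hdle, hdv⟩, hdb⟩ := hd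
  have hV : V c.support = V d.support := by
    rw [← val_eq_V c hcle, ← val_eq_V d hdle, hcv, hdv]
  have hsupp : c.support = d.support := V_inj _ _ (support_berg hcb) (support_berg hdb) hV
  ext i
  by_cases h : i ∈ c.support
  · rw [support_one hcle h, support_one hdle (hsupp ▸ h)]
  · rw [Finsupp.notMem_support_iff.mp h,
      Finsupp.notMem_support_iff.mp (fun hh => h (hsupp ▸ hh))]

lemma no_adm (n : ℕ) (hn : 1 ≤ n) :
    ¬∃ c, IsAdmissible (lucas (2 * n) + 1) c ∧ c 1 = 1 ∧ c 0 = 1 := by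
  have hn' : (1 : ℤ) ≤ (n : ℤ) := by exact_mod_cast hn
  rintro ⟨c, ⟨⟨hle, hval⟩, hadm⟩, h1, h0⟩
  have h0s : (0 : ℤ) ∈ c.support := Finsupp.mem_support_iff.mpr (by omega)
  have h1s : (1 : ℤ) ∈ c.support := Finsupp.mem_support_iff.mpr (by omega)
  set t := c.support.erase 0 with ht_def
  have hBt : Berg t := by
    intro i hi hi1
    have his : i ∈ c.support := Finset.mem_of_mem_erase hi
    have hine : i ≠ 0 := Finset.ne_of_mem_erase hi
    have := hadm i hine
    have hci : c i ≠ 0 := Finsupp.mem_support_iff.mp his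
    have hci1 : c (i + 1) ≠ 0 := Finsupp.mem_support_iff.mp (Finset.mem_of_mem_erase hi1)
    rcases Nat.mul_eq_zero.mp this with h | h
    · exact hci1 h
    · exact hci h
  have hVt : V t = (lucas (2 * n) : ℝ) := by
    have e := V_erase_add h0s
    rw [val_eq_V c hle] at hval
    rw [← ht_def] at e
    have : ((lucas (2 * n) + 1 : ℕ) : ℝ) = (lucas (2 * n) : ℝ) + 1 := by push_cast; ring
    rw [this] at hval
    simp only [zpow_zero] at e
    linarith
  have hVu : V (uset n) = (lucas (2 * n) : ℝ) := by
    rw [V_uset n hn, lucas_phi]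
    push_cast
    ring
  have htu : t = uset n := V_inj _ _ hBt (berg_uset n hn) (by rw [hVt, hVu])
  have h1t : (1 : ℤ) ∈ t := Finset.mem_erase.mpr ⟨one_ne_zero, h1s⟩
  rw [htu, mem_uset] at h1t
  omega

end Stmt5Aux

theorem stmt5 (n : ℕ) (hn : 1 ≤ n) :
    canonicalRep (lucas (2 * n) + 1) = bergmanRep (lucas (2 * n) + 1) ∧
    (∀ i : ℤ, canonicalRep (lucas (2 * n) + 1) i = 1 ↔
      (i = (2 * n : ℤ) ∨ i = 0 ∨ i = -(2 * n : ℤ))) ∧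
    (lucas (2 * n) + 1 : ℝ) = goldenPhi ^ (2 * n : ℤ) + 1 + goldenPhi ^ (-(2 * n : ℤ)) := by
  open Stmt5Aux in
  have hcan : canonicalRep (lucas (2 * n) + 1) = bergmanRep (lucas (2 * n) + 1) := by
    rw [canonicalRep, dif_neg (Stmt5Aux.no_adm n hn)]
  have hex : ∃ c, IsBergman (lucas (2 * n) + 1) c := ⟨Stmt5Aux.brep n, Stmt5Aux.brep_bergman n hn⟩
  have hberg : bergmanRep (lucas (2 * n) + 1) = Stmt5Aux.brep n := by
    rw [bergmanRep, dif_pos hex]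
    exact Stmt5Aux.berg_unique hex.choose_spec (Stmt5Aux.brep_bergman n hn)
  refine ⟨hcan, ?_, ?_⟩
  · intro i
    rw [hcan, hberg, Stmt5Aux.brep_apply, ← Stmt5Aux.mem_bset]
    by_cases h : i ∈ Stmt5Aux.bset n <;> simp [h]
  · have := Stmt5Aux.Nval n
    push_cast at this ⊢
    linarith
end
end

section
/- For every n ≥ 1, the canonical representation of L_{2n+1} + 1 equals its Bergman representation, and it has digit 1 exactly at position 2n+1, at the odd negative positions -1, -3, ..., -(2n-1), and at position -(2n+2). -/
noncomputable section

attribute [local instance] Classical.propDecidable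

namespace S6

lemma gphi_eq : goldenPhi = Real.goldenRatio := rfl
lemma gphi_pos : 0 < goldenPhi := gphi_eq ▸ Real.goldenRatio_pos
lemma gphi_ne : goldenPhi ≠ 0 := ne_of_gt gphi_pos
lemma one_lt_gphi : 1 < goldenPhi := gphi_eq ▸ Real.one_lt_goldenRatio
lemma gphi_sq : goldenPhi ^ 2 = goldenPhi + 1 := gphi_eq ▸ Real.goldenRatio_sq

lemma zpow_rec (i : ℤ) : goldenPhi ^ (i + 2) = goldenPhi ^ (i + 1) + goldenPhi ^ i := by
  have h2 : goldenPhi ^ (2:ℤ) = goldenPhi + 1 := by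
    rw [show (2:ℤ) = ((2:ℕ):ℤ) by norm_num, zpow_natCast, gphi_sq]
  rw [zpow_add₀ gphi_ne, zpow_add₀ gphi_ne, h2, zpow_one]; ring

def val (c : ℤ →₀ ℕ) : ℝ := c.sum fun i a => (a : ℝ) * goldenPhi ^ i

lemma val_eq_sum (c : ℤ →₀ ℕ) (s : Finset ℤ) (hs : c.support ⊆ s) :
    val c = ∑ i ∈ s, (c i : ℝ) * goldenPhi ^ i := by
  rw [val, Finsupp.sum_of_support_subset c hs]
  intro i _; simp

lemma le_val (c : ℤ →₀ ℕ) (i : ℤ) (hi : c i = 1) : goldenPhi ^ i ≤ val c := by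
  rw [val, Finsupp.sum]
  have hmem : i ∈ c.support := by simp [hi]
  have := Finset.single_le_sum (f := fun j => (c j : ℝ) * goldenPhi ^ j)
    (fun j _ => mul_nonneg (by positivity) (zpow_nonneg gphi_pos.le j)) hmem
  simpa [hi] using this

lemma val_add (f g : ℤ →₀ ℕ) : val (f + g) = val f + val g := by
  unfold val
  apply Finsupp.sum_add_index' (fun i => by simp) (fun i a b => by push_cast; ring)

lemma val_single (i : ℤ) (a : ℕ) : val (Finsupp.single i a) = (a : ℝ) * goldenPhi ^ i := by
  unfold val
  exact Finsupp.sum_single_index (by simp)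

lemma val_erase (c : ℤ →₀ ℕ) (i : ℤ) :
    val c = val (c.erase i) + (c i : ℝ) * goldenPhi ^ i := by
  conv_lhs => rw [← Finsupp.erase_add_single i c]
  rw [val_add, val_single]

lemma zpow_mono {i j : ℤ} (h : i ≤ j) : goldenPhi ^ i ≤ goldenPhi ^ j :=
  zpow_le_zpow_right₀ one_lt_gphi.le h

lemma val_lt_aux : ∀ k : ℕ, ∀ (c : ℤ →₀ ℕ), c.support.card = k → (∀ i, c i ≤ 1) →
    (∀ i, c (i+1) * c i = 0) → ∀ m : ℤ, (∀ i, m ≤ i → c i = 0) → val c < goldenPhi ^ m := by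
  intro k
  induction k using Nat.strong_induction_on with
  | _ k ih =>
    intro c hcard hd hnc m hm
    rcases Finset.eq_empty_or_nonempty c.support with he | hne
    · have : c = 0 := Finsupp.support_eq_empty.mp he
      rw [this]
      simp only [val, Finsupp.sum_zero_index]
      exact zpow_pos gphi_pos m
    · set j := c.support.max' hne with hj
      have hjs : j ∈ c.support := c.support.max'_mem hne
      have hcj : c j = 1 := le_antisymm (hd j) (Nat.one_le_iff_ne_zero.mpr (Finsupp.mem_support_iff.mp hjs))
      have hjm : j < m := by
        by_contra h
        exact Finsupp.mem_support_iff.mp hjs (hm j (le_of_not_gt h))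
      have hprev : c (j - 1) = 0 := by
        have := hnc (j - 1)
        rw [sub_add_cancel, hcj] at this
        omega
      set c' := c.erase j with hc'
      have hcard' : c'.support.card = k - 1 := by
        rw [hc', Finsupp.support_erase, Finset.card_erase_of_mem hjs, hcard]
      have hk : 1 ≤ k := by rw [← hcard]; exact Finset.card_pos.mpr hne
      have ih' : val c' < goldenPhi ^ (j - 1) := by
        apply ih (k-1) (by omega) c' hcard'
        · intro i; rw [hc', Finsupp.erase_apply]; split <;> simp [hd]
        · intro i
          rw [hc', Finsupp.erase_apply, Finsupp.erase_apply]
          split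
          · simp
          · split
            · simp
            · exact hnc i
        · intro i hi
          rw [hc', Finsupp.erase_apply]
          split
          · rfl
          · rename_i hne2
            rcases lt_or_eq_of_le hi with h1 | h1
            · by_contra hc0
              have : i ∈ c.support := Finsupp.mem_support_iff.mpr hc0
              have := c.support.le_max' i this
              omega
            · exact h1 ▸ hprev
      have : val c = val c' + goldenPhi ^ j := by
        rw [val_erase c j, hcj]; push_cast; ring
      rw [this]
      have hrec : goldenPhi ^ (j + 1) = goldenPhi ^ j + goldenPhi ^ (j - 1) := by
        have := zpow_rec (j - 1)
        rw [sub_add_cancel] at this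
        rw [show j + 1 = j - 1 + 2 by ring, this]
      calc val c' + goldenPhi ^ j < goldenPhi ^ (j-1) + goldenPhi ^ j := by linarith
        _ = goldenPhi ^ (j + 1) := by rw [hrec]; ring
        _ ≤ goldenPhi ^ m := zpow_mono (by omega)

lemma val_lt (c : ℤ →₀ ℕ) (hd : ∀ i, c i ≤ 1) (hnc : ∀ i, c (i+1) * c i = 0)
    (m : ℤ) (hm : ∀ i, m ≤ i → c i = 0) : val c < goldenPhi ^ m :=
  val_lt_aux c.support.card c rfl hd hnc m hm

lemma unique_aux (c c' : ℤ →₀ ℕ)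
    (hd : ∀ i, c i ≤ 1) (hd' : ∀ i, c' i ≤ 1) (hnc' : ∀ i, c' (i+1) * c' i = 0)
    (hv : val c = val c') (m : ℤ) (hgt : ∀ i, m < i → c i = c' i)
    (h1 : c m = 1) (h0 : c' m = 0) : False := by
  classical
  set p : ℤ → Prop := fun i => m < i with hp
  have hsplit : ∀ f : ℤ →₀ ℕ, val f = val (f.filter p) + val (f.filter fun i => ¬ p i) := by
    intro f
    rw [← val_add, Finsupp.filter_pos_add_filter_neg]
  have hhi : c.filter p = c'.filter p := by
    ext i
    rw [Finsupp.filter_apply, Finsupp.filter_apply]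
    split
    · exact hgt i (by assumption)
    · rfl
  have hlo : val (c.filter fun i => ¬ p i) = val (c'.filter fun i => ¬ p i) := by
    have e1 := hsplit c
    have e2 := hsplit c'
    rw [hhi] at e1
    linarith
  have hge : goldenPhi ^ m ≤ val (c.filter fun i => ¬ p i) := by
    apply le_val
    rw [Finsupp.filter_apply]
    simp only [hp, lt_irrefl, not_false_iff, if_true]
    exact h1
  have hlt : val (c'.filter fun i => ¬ p i) < goldenPhi ^ m := by
    apply val_lt
    · intro i; rw [Finsupp.filter_apply]; split <;> simp [hd']
    · intro i
      rw [Finsupp.filter_apply, Finsupp.filter_apply]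
      split
      · split
        · exact hnc' i
        · simp
      · simp
    · intro i hi
      rw [Finsupp.filter_apply]
      split
      · rename_i h
        have : i = m := le_antisymm (not_lt.mp (by simpa [hp] using h)) hi
        rw [this]; exact h0
      · rfl
  linarith

lemma bergman_unique (c c' : ℤ →₀ ℕ)
    (hd : ∀ i, c i ≤ 1) (hnc : ∀ i, c (i+1) * c i = 0)
    (hd' : ∀ i, c' i ≤ 1) (hnc' : ∀ i, c' (i+1) * c' i = 0)
    (hv : val c = val c') : c = c' := by
  by_contra h
  have hne : ∃ i, c i ≠ c' i := by
    by_contra hall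
    push_neg at hall
    exact h (Finsupp.ext hall)
  classical
  set T : Finset ℤ := (c.support ∪ c'.support).filter (fun i => c i ≠ c' i) with hT
  have hTne : T.Nonempty := by
    obtain ⟨i, hi⟩ := hne
    refine ⟨i, ?_⟩
    rw [hT, Finset.mem_filter]
    refine ⟨?_, hi⟩
    rw [Finset.mem_union, Finsupp.mem_support_iff, Finsupp.mem_support_iff]
    omega
  set m := T.max' hTne with hm
  have hmT : m ∈ T := T.max'_mem hTne
  have hmne : c m ≠ c' m := (Finset.mem_filter.mp hmT).2
  have hgt : ∀ i, m < i → c i = c' i := by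
    intro i hi
    by_contra hne2
    have : i ∈ T := by
      rw [hT, Finset.mem_filter]
      refine ⟨?_, hne2⟩
      rw [Finset.mem_union, Finsupp.mem_support_iff, Finsupp.mem_support_iff]
      omega
    exact absurd (T.le_max' i this) (not_le.mpr hi)
  have h1 := hd m
  have h2 := hd' m
  interval_cases h : c m <;> interval_cases h' : c' m
  · exact hmne (by omega)
  · exact unique_aux c' c hd' hd hnc hv.symm m (fun i hi => (hgt i hi).symm) h' h
  · exact unique_aux c c' hd hd' hnc' hv m hgt h h'
  · exact hmne (by omega)

lemma psi_sq : (-goldenPhi⁻¹) ^ 2 = (-goldenPhi⁻¹) + 1 := by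
  have h0 := gphi_ne
  field_simp
  linear_combination (-1)*gphi_sq

lemma lucas_real : ∀ k : ℕ, (lucas k : ℝ) = goldenPhi ^ k + (-goldenPhi⁻¹) ^ k
  | 0 => by norm_num [lucas]
  | 1 => by
    have h0 := gphi_ne
    show ((1:ℕ) : ℝ) = _
    push_cast
    rw [pow_one, pow_one]
    field_simp
    linear_combination (-1)*gphi_sq
  | (k+2) => by
    show ((lucas (k+1) + lucas k : ℕ) : ℝ) = _
    push_cast
    rw [lucas_real (k+1), lucas_real k]
    linear_combination (-(goldenPhi ^ k)) * gphi_sq + (-((-goldenPhi⁻¹) ^ k)) * psi_sq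

lemma cast_pow (m : ℕ) : goldenPhi ^ m = goldenPhi ^ (m : ℤ) := (zpow_natCast _ m).symm

lemma neg_inv_pow (k : ℕ) : (-goldenPhi⁻¹) ^ k = (-1:ℝ)^k * goldenPhi ^ (-(k:ℤ)) := by
  rw [neg_pow, inv_pow, cast_pow, ← zpow_neg]

lemma lucas_odd (k : ℕ) :
    (lucas (2*k+1) : ℝ) = goldenPhi ^ (2*(k:ℤ)+1) - goldenPhi ^ (-(2*(k:ℤ)+1)) := by
  rw [lucas_real, neg_inv_pow, Odd.neg_one_pow ⟨k, by ring⟩, cast_pow]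
  rw [show ((2*k+1 : ℕ) : ℤ) = 2*(k:ℤ)+1 by push_cast; ring]
  ring

lemma lucas_even (k : ℕ) :
    (lucas (2*k) : ℝ) = goldenPhi ^ (2*(k:ℤ)) + goldenPhi ^ (-(2*(k:ℤ))) := by
  rw [lucas_real, neg_inv_pow, Even.neg_one_pow ⟨k, by ring⟩, cast_pow]
  rw [show ((2*k : ℕ) : ℤ) = 2*(k:ℤ) by push_cast; ring]
  ring

def S (n : ℕ) : Finset ℤ :=
  insert (2*(n:ℤ)+1) (insert (-(2*(n:ℤ))-2)
    ((Finset.range n).image fun j : ℕ => -(2*(j:ℤ))-1))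

lemma mem_S (n : ℕ) (i : ℤ) :
    i ∈ S n ↔ i = 2*(n:ℤ)+1 ∨ (Odd i ∧ -(2*(n:ℤ)-1) ≤ i ∧ i ≤ -1) ∨ i = -(2*(n:ℤ)+2) := by
  simp only [S, Finset.mem_insert, Finset.mem_image, Finset.mem_range]
  constructor
  · rintro (h | h | ⟨j, hj, rfl⟩)
    · left; omega
    · right; right; omega
    · right; left
      exact ⟨⟨-(j:ℤ)-1, by ring⟩, by omega, by omega⟩
  · rintro (h | ⟨⟨t, ht⟩, h2, h3⟩ | h)
    · left; omega
    · right; right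
      exact ⟨(-(t+1)).toNat, by omega, by omega⟩
    · right; left; omega

lemma sum_S : ∀ n : ℕ, ∑ i ∈ S n, goldenPhi ^ i = (lucas (2*n+1) : ℝ) + 1 := by
  have htop : ∀ n : ℕ, (2*(n:ℤ)+1) ∉
      (insert (-(2*(n:ℤ))-2) ((Finset.range n).image fun j : ℕ => -(2*(j:ℤ))-1)) := by
    intro n
    simp only [Finset.mem_insert, Finset.mem_image, Finset.mem_range]
    push_neg
    exact ⟨by omega, fun j hj => by omega⟩
  have hbot : ∀ n : ℕ, (-(2*(n:ℤ))-2) ∉ ((Finset.range n).image fun j : ℕ => -(2*(j:ℤ))-1) := by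
    intro n
    simp only [Finset.mem_image, Finset.mem_range]
    push_neg
    intro j hj; omega
  have hS : ∀ n : ℕ, ∑ i ∈ S n, goldenPhi ^ i =
      goldenPhi ^ (2*(n:ℤ)+1) + goldenPhi ^ (-(2*(n:ℤ))-2)
        + ∑ i ∈ (Finset.range n).image (fun j : ℕ => -(2*(j:ℤ))-1), goldenPhi ^ i := by
    intro n
    rw [S, Finset.sum_insert (htop n), Finset.sum_insert (hbot n)]
    ring
  have hM : ∀ n : ℕ, ∑ i ∈ (Finset.range n).image (fun j : ℕ => -(2*(j:ℤ))-1), goldenPhi ^ i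
      = ∑ j ∈ Finset.range n, goldenPhi ^ (-(2*(j:ℤ))-1) := by
    intro n
    rw [Finset.sum_image]
    intro a _ b _ hab
    simp only at hab
    omega
  intro n
  induction n with
  | zero =>
    rw [hS, hM, Finset.range_zero, Finset.sum_empty]
    rw [show (2*((0:ℕ):ℤ)+1) = 1 by norm_num, show (-(2*((0:ℕ):ℤ))-2) = -2 by norm_num]
    rw [show lucas (2*0+1) = 1 from rfl]
    have h1 : goldenPhi ^ (1:ℤ) = goldenPhi := zpow_one _
    have h2 : goldenPhi ^ (-2:ℤ) = (goldenPhi^2)⁻¹ := by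
      rw [zpow_neg, show (2:ℤ) = ((2:ℕ):ℤ) by norm_num, zpow_natCast]
    rw [h1, h2, gphi_sq]
    have hne : goldenPhi + 1 ≠ 0 := by nlinarith [gphi_pos]
    push_cast
    field_simp
    linear_combination gphi_sq
  | succ m ih =>
    rw [hS, hM, Finset.sum_range_succ, ← hM m]
    have e1 : ∑ i ∈ (Finset.range m).image (fun j : ℕ => -(2*(j:ℤ))-1), goldenPhi ^ i
        = ((lucas (2*m+1) : ℕ) : ℝ) + 1 - goldenPhi ^ (2*(m:ℤ)+1) - goldenPhi ^ (-(2*(m:ℤ))-2) := by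
      have h := hS m
      rw [ih] at h
      linarith
    rw [e1]
    have hluc : ((lucas (2*(m+1)+1) : ℕ) : ℝ) = ((lucas (2*m+2) : ℕ) : ℝ) + ((lucas (2*m+1) : ℕ) : ℝ) := by
      rw [show 2*(m+1)+1 = 2*m+1+2 by ring, show lucas (2*m+1+2) = lucas (2*m+2) + lucas (2*m+1) from rfl]
      push_cast; ring
    rw [hluc]
    have heven : ((lucas (2*m+2) : ℕ) : ℝ)
        = goldenPhi ^ (2*(m:ℤ)+2) + goldenPhi ^ (-(2*(m:ℤ))-2) := by
      have h := lucas_even (m+1)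
      rw [show 2*(m+1) = 2*m+2 by ring] at h
      rw [show ((m+1:ℕ):ℤ) = (m:ℤ)+1 by push_cast; ring] at h
      rw [show 2*((m:ℤ)+1) = 2*(m:ℤ)+2 by ring] at h
      rw [h]
      congr 2
      ring
    rw [heven]
    rw [show ((m+1:ℕ):ℤ) = (m:ℤ)+1 by push_cast; ring]
    rw [show 2*((m:ℤ)+1)+1 = (2*(m:ℤ)+1)+2 by ring]
    rw [show -(2*((m:ℤ)+1))-2 = (-(2*(m:ℤ))-4) by ring]
    rw [show (2*(m:ℤ)+1)+2 = 2*(m:ℤ)+3 by ring]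
    have r1 := zpow_rec (2*(m:ℤ)+1)
    rw [show (2*(m:ℤ)+1)+2 = 2*(m:ℤ)+3 by ring, show (2*(m:ℤ)+1)+1 = 2*(m:ℤ)+2 by ring] at r1
    have r2 := zpow_rec (-(2*(m:ℤ))-3)
    have r3 := zpow_rec (-(2*(m:ℤ))-4)
    rw [show -(2*(m:ℤ))-3+2 = -(2*(m:ℤ))-1 by ring, show -(2*(m:ℤ))-3+1 = -(2*(m:ℤ))-2 by ring] at r2
    rw [show -(2*(m:ℤ))-4+2 = -(2*(m:ℤ))-2 by ring, show -(2*(m:ℤ))-4+1 = -(2*(m:ℤ))-3 by ring] at r3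
    linarith [r1, r2, r3]

def P (N : ℕ) (k : ℕ) (c : ℤ →₀ ℕ) : Prop :=
  (∀ i, c i ≤ 1) ∧ val c = (N : ℝ) ∧
  (∀ i : ℤ, -1 ≤ i → i < 2*(k:ℤ) → c i = 0) ∧
  c (2*(k:ℤ)) = 1 ∧
  (∀ i : ℤ, i ≠ 2*(k:ℤ) → c (i+1) * c i = 0)

lemma P_step {N : ℕ} {k : ℕ} {c : ℤ →₀ ℕ} (hP : P N k c) (h1 : c (2*(k:ℤ)+1) = 1) :
    P N (k+1) ((c.erase (2*(k:ℤ))).erase (2*(k:ℤ)+1) + Finsupp.single (2*(k:ℤ)+2) 1) := by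
  obtain ⟨hd, hv, hz, hk, hnc⟩ := hP
  have h2 : c (2*(k:ℤ)+2) = 0 := by
    have := hnc (2*(k:ℤ)+1) (by omega)
    rw [show (2*(k:ℤ)+1)+1 = 2*(k:ℤ)+2 by ring, h1, mul_one] at this
    exact this
  set c' := (c.erase (2*(k:ℤ))).erase (2*(k:ℤ)+1) + Finsupp.single (2*(k:ℤ)+2) 1 with hc'
  have happ : ∀ i : ℤ, c' i =
      (if i = 2*(k:ℤ) ∨ i = 2*(k:ℤ)+1 then 0 else c i) + (if i = 2*(k:ℤ)+2 then 1 else 0) := by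
    intro i
    rw [hc', Finsupp.add_apply, Finsupp.erase_apply, Finsupp.erase_apply, Finsupp.single_apply]
    by_cases ha : i = 2*(k:ℤ)+1
    · simp [ha]
    · by_cases hb : i = 2*(k:ℤ)
      · simp [ha, hb]
      · by_cases hcc : i = 2*(k:ℤ)+2
        · simp [ha, hb, hcc]
        · simp [ha, hb, hcc, Ne.symm hcc]
  constructor
  · intro i
    rw [happ i]
    split
    · split <;> omega
    · split
      · rename_i hno hyes
        rw [hyes]
        omega
      · have := hd i; omega
  refine ⟨?_, ?_, ?_, ?_⟩
  · -- value preserved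
    have e0 : val c = val (c.erase (2*(k:ℤ))) + goldenPhi ^ (2*(k:ℤ)) := by
      have := val_erase c (2*(k:ℤ)); rw [hk] at this; push_cast at this; linarith
    have e1 : val (c.erase (2*(k:ℤ))) = val ((c.erase (2*(k:ℤ))).erase (2*(k:ℤ)+1))
        + goldenPhi ^ (2*(k:ℤ)+1) := by
      have h := val_erase (c.erase (2*(k:ℤ))) (2*(k:ℤ)+1)
      rw [Finsupp.erase_apply] at h
      rw [if_neg (by omega), h1] at h
      push_cast at h; linarith
    have e2 : val c' = val ((c.erase (2*(k:ℤ))).erase (2*(k:ℤ)+1)) + goldenPhi ^ (2*(k:ℤ)+2) := by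
      rw [hc', val_add, val_single]; push_cast; ring
    have hr := zpow_rec (2*(k:ℤ))
    rw [show 2*(k:ℤ)+2 = 2*((k:ℤ)+1) by ring] at hr e2
    rw [e0, e1] at hv
    rw [e2]
    linarith
  · intro i hi1 hi2
    rw [happ i]
    have : ¬ i = 2*(k:ℤ)+2 := by push_cast at hi2; omega
    rw [if_neg this]
    split
    · ring
    · rename_i hno
      push_neg at hno
      have : i < 2*(k:ℤ) := by push_cast at hi2; omega
      rw [hz i hi1 this]
  · rw [happ]
    rw [if_neg (by push_cast; omega), if_pos (by push_cast; ring)]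
    have : c (2*((k+1:ℕ)):ℤ) = 0 := by
      rw [show ((2*((k+1:ℕ)):ℤ)) = 2*(k:ℤ)+2 by push_cast; ring]
      exact h2
    rw [show ((2*((k+1:ℕ)):ℤ)) = 2*(k:ℤ)+2 by push_cast; ring] at this ⊢
    omega
  · intro i hi
    have hi' : i ≠ 2*(k:ℤ)+2 := by
      intro h; apply hi; rw [h]; push_cast; ring
    rw [happ i, happ (i+1)]
    rw [if_neg hi']
    by_cases ha : i+1 = 2*(k:ℤ) ∨ i+1 = 2*(k:ℤ)+1
    · have hb2 : ¬ (i+1 = 2*(k:ℤ)+2) := by omega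
      rw [if_pos ha, if_neg hb2]; simp
    · rw [if_neg ha]
      by_cases hb : i = 2*(k:ℤ) ∨ i = 2*(k:ℤ)+1
      · rw [if_pos hb]; simp [hi']
      · rw [if_neg hb]
        by_cases hcc : i+1 = 2*(k:ℤ)+2
        · exfalso; push_neg at hb; omega
        · rw [if_neg hcc]
          simp only [add_zero]
          exact hnc i (by push_neg at hb; exact hb.1)

lemma no_P (N : ℕ) (b : ℤ →₀ ℕ)
    (hbd : ∀ i, b i ≤ 1) (hbnc : ∀ i, b (i+1) * b i = 0)
    (hbv : val b = (N : ℝ)) (hbneg : b (-1) = 1) :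
    ∀ (t k : ℕ) (c : ℤ →₀ ℕ), P N k c → (N : ℝ) < goldenPhi ^ (2*((k:ℤ)+(t:ℤ))) → False := by
  intro t
  induction t with
  | zero =>
    intro k c hP hlt
    obtain ⟨hd, hv, hz, hk, hnc⟩ := hP
    have := le_val c (2*(k:ℤ)) hk
    rw [hv] at this
    push_cast at hlt
    rw [show 2*((k:ℤ)+0) = 2*(k:ℤ) by ring] at hlt
    linarith
  | succ t ih =>
    intro k c hP hlt
    have hd := hP.1
    have h01 := hd (2*(k:ℤ)+1)
    by_cases h1 : c (2*(k:ℤ)+1) = 1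
    · have hstep := P_step hP h1
      apply ih (k+1) _ hstep
      have e : 2*((((k+1:ℕ)):ℤ)+(t:ℤ)) = 2*((k:ℤ)+((t+1:ℕ):ℤ)) := by push_cast; ring
      rw [e]
      exact hlt
    · -- c is a Bergman rep with c (-1) = 0, contradiction with uniqueness vs b
      obtain ⟨hd', hv, hz, hk, hnc⟩ := hP
      have h0 : c (2*(k:ℤ)+1) = 0 := by omega
      have hnc' : ∀ i, c (i+1) * c i = 0 := by
        intro i
        by_cases hik : i = 2*(k:ℤ)
        · rw [hik, h0, zero_mul]
        · exact hnc i hik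
      have := bergman_unique c b hd' hnc' hbd hbnc (by rw [hv, hbv])
      have hc1 : c (-1) = 0 := hz (-1) (by omega) (by omega)
      rw [this] at hc1
      omega

def brep (n : ℕ) : ℤ →₀ ℕ := Finsupp.indicator (S n) fun _ _ => 1

lemma brep_apply (n : ℕ) (i : ℤ) : brep n i = if i ∈ S n then 1 else 0 := by
  by_cases h : i ∈ S n
  · rw [if_pos h, brep, Finsupp.indicator_of_mem h]
  · rw [if_neg h, brep, Finsupp.indicator_of_notMem h]

lemma brep_digits (n : ℕ) : ∀ i, brep n i ≤ 1 := by
  intro i; rw [brep_apply]; split <;> omega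

lemma brep_nc (n : ℕ) : ∀ i : ℤ, brep n (i+1) * brep n i = 0 := by
  intro i
  rw [brep_apply, brep_apply]
  by_cases h1 : (i+1) ∈ S n
  · by_cases h2 : i ∈ S n
    · exfalso
      rw [mem_S] at h1 h2
      rcases h1 with h1 | ⟨⟨a, ha⟩, h1b, h1c⟩ | h1 <;>
        rcases h2 with h2 | ⟨⟨b2, hb2⟩, h2b, h2c⟩ | h2 <;> omega
    · rw [if_neg h2, mul_zero]
  · rw [if_neg h1, zero_mul]

lemma brep_val (n : ℕ) : val (brep n) = ((lucas (2*n+1) : ℕ) : ℝ) + 1 := by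
  have hsub : (brep n).support ⊆ S n := by
    intro i hi
    by_contra h
    exact Finsupp.mem_support_iff.mp hi (by rw [brep_apply, if_neg h])
  rw [val_eq_sum (brep n) (S n) hsub, ← sum_S n]
  apply Finset.sum_congr rfl
  intro i hi
  rw [brep_apply, if_pos hi]
  norm_num

lemma brep_neg_one (n : ℕ) (hn : 1 ≤ n) : brep n (-1) = 1 := by
  rw [brep_apply, if_pos]
  rw [mem_S]
  right; left
  exact ⟨⟨-1, by ring⟩, by omega, by omega⟩

lemma N_lt (N : ℕ) : (N : ℝ) < goldenPhi ^ (2*((0:ℤ)+(N:ℤ))) := by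
  have h2 : (2:ℝ) ≤ goldenPhi^2 := by rw [gphi_sq]; linarith [one_lt_gphi]
  calc (N:ℝ) < 2^N := by exact_mod_cast Nat.lt_two_pow_self (n := N)
    _ ≤ (goldenPhi^2)^N := pow_le_pow_left₀ (by norm_num) h2 N
    _ = goldenPhi^(2*N) := by rw [← pow_mul]
    _ = goldenPhi ^ ((2*N:ℕ):ℤ) := cast_pow _
    _ = goldenPhi ^ (2*((0:ℤ)+(N:ℤ))) := by congr 1; push_cast; ring

lemma no_adm (n : ℕ) (hn : 1 ≤ n) :
    ¬∃ c, IsAdmissible (lucas (2*n+1) + 1) c ∧ c 1 = 1 ∧ c 0 = 1 := by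
  rintro ⟨c, ⟨⟨hd, hval⟩, hnc⟩, h1, h0⟩
  set N := lucas (2*n+1) + 1 with hN
  have hP : P N 0 c := by
    refine ⟨hd, hval, ?_, ?_, ?_⟩
    · intro i hi1 hi2
      have : i = -1 := by push_cast at hi2; omega
      subst this
      have := hnc (-1) (by norm_num)
      rw [show (-1:ℤ)+1 = 0 by norm_num, h0, one_mul] at this
      exact this
    · rw [show (2*((0:ℕ):ℤ)) = 0 by norm_num]; exact h0
    · intro i hi
      rw [show (2*((0:ℕ):ℤ)) = 0 by norm_num] at hi
      exact hnc i hi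
  have hbv : val (brep n) = (N : ℝ) := by
    rw [brep_val, hN]; push_cast; ring
  exact no_P N (brep n) (brep_digits n) (brep_nc n) hbv (brep_neg_one n hn) N 0 c hP (N_lt N)

lemma brep_isBergman (n : ℕ) : IsBergman (lucas (2*n+1) + 1) (brep n) := by
  refine ⟨⟨brep_digits n, ?_⟩, brep_nc n⟩
  show val (brep n) = _
  rw [brep_val]
  push_cast; ring

end S6

theorem stmt6 (n : ℕ) (hn : 1 ≤ n) :
    canonicalRep (lucas (2 * n + 1) + 1) = bergmanRep (lucas (2 * n + 1) + 1) ∧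
    (∀ i : ℤ, canonicalRep (lucas (2 * n + 1) + 1) i = 1 ↔
      (i = (2 * n + 1 : ℤ) ∨ (Odd i ∧ -(2 * (n : ℤ) - 1) ≤ i ∧ i ≤ -1) ∨
        i = -(2 * (n : ℤ) + 2))) := by
  set N := lucas (2 * n + 1) + 1 with hN
  have hB := S6.brep_isBergman n
  have hex : ∃ c, IsBergman N c := ⟨S6.brep n, hB⟩
  have hbr : bergmanRep N = S6.brep n := by
    rw [bergmanRep, dif_pos hex]
    obtain ⟨⟨hd, hv⟩, hnc⟩ := hex.choose_spec
    apply S6.bergman_unique _ _ hd hnc (S6.brep_digits n) (S6.brep_nc n)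
    have hv' : S6.val hex.choose = (N : ℝ) := hv
    rw [hv']
    exact hB.1.2.symm
  have hcan : canonicalRep N = bergmanRep N := by
    rw [canonicalRep, dif_neg (S6.no_adm n hn)]
  refine ⟨hcan, ?_⟩
  intro i
  rw [hcan, hbr]
  rw [S6.brep_apply]
  by_cases h : i ∈ S6.S n
  · rw [if_pos h]
    constructor
    · intro _; exact (S6.mem_S n i).mp h
    · intro _; rfl
  · rw [if_neg h]
    constructor
    · intro h0; exact absurd h0 (by norm_num)
    · intro hr; exact absurd ((S6.mem_S n i).mpr hr) h
end
end
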